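/- arXiv:2511.10630 — 6 statements merged into one kernel-verified Lean document; each statement's English description precedes it below -/
import Mathlib

section
/- Let $d, m \ge 2$, $n \in \mathbb{N}$, $\delta \in (0, 1/2]$, and let $\Omega_n$ be the set of matrices $x \in \mathbb{Z}_{\ge 0}^{d \times m}$ with row sums $mn$ and column sums $dn$. For $\eta \in \mathrm{Macro}(\delta) := \{x \in \Omega_n : x(i,j) \ge n - \delta n \text{ for all } i,j\}$ and any integer $r$ with $0 < r < \delta n$, the number of configurations $\zeta \in \Omega_n$ with $\|\zeta - \eta\|_1 \le r/2$ is at most $(r+1)^{(d-1)(m-1)}$, and at least $c_0 r^{(d-1)(m-1)}$ for a constant $c_0 > 0$ depending only on $m$ and $d$, provided $n$ is sufficiently large. -/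
open Finset

private lemma cancel_sum {α : Type*} [Fintype α] [DecidableEq α] (f g : α → ℕ) (j : α)
    (h : ∀ x, x ≠ j → f x = g x) (hs : ∑ x, f x = ∑ x, g x) : f j = g j := by
  classical
  rw [← Finset.add_sum_erase _ f (mem_univ j), ← Finset.add_sum_erase _ g (mem_univ j)] at hs
  have : ∑ x ∈ univ.erase j, f x = ∑ x ∈ univ.erase j, g x :=
    Finset.sum_congr rfl fun x hx => h x (Finset.ne_of_mem_erase hx)
  omega

/-- The perturbation construction for the lower bound. -/
private def pert (d m s : ℕ) (η : Fin (d + 1) → Fin (m + 1) → ℕ)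
    (a : Fin d → Fin m → Fin (s + 1)) : Fin (d + 1) → Fin (m + 1) → ℕ :=
  Fin.snoc
    (fun i' => Fin.snoc (fun j' => η i'.castSucc j'.castSucc + a i' j')
      (η i'.castSucc (Fin.last m) - ∑ j', (a i' j' : ℕ)))
    (Fin.snoc (fun j' => η (Fin.last d) j'.castSucc - ∑ i', (a i' j' : ℕ))
      (η (Fin.last d) (Fin.last m) + ∑ i', ∑ j', (a i' j' : ℕ)))

private lemma pert_cc (d m s : ℕ) (η : Fin (d + 1) → Fin (m + 1) → ℕ)
    (a : Fin d → Fin m → Fin (s + 1)) (i' : Fin d) (j' : Fin m) :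
    pert d m s η a i'.castSucc j'.castSucc = η i'.castSucc j'.castSucc + a i' j' := by
  simp [pert]

private lemma pert_cl (d m s : ℕ) (η : Fin (d + 1) → Fin (m + 1) → ℕ)
    (a : Fin d → Fin m → Fin (s + 1)) (i' : Fin d) :
    pert d m s η a i'.castSucc (Fin.last m) =
      η i'.castSucc (Fin.last m) - ∑ j', (a i' j' : ℕ) := by
  simp [pert]

private lemma pert_lc (d m s : ℕ) (η : Fin (d + 1) → Fin (m + 1) → ℕ)
    (a : Fin d → Fin m → Fin (s + 1)) (j' : Fin m) :
    pert d m s η a (Fin.last d) j'.castSucc =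
      η (Fin.last d) j'.castSucc - ∑ i', (a i' j' : ℕ) := by
  simp [pert]

private lemma pert_ll (d m s : ℕ) (η : Fin (d + 1) → Fin (m + 1) → ℕ)
    (a : Fin d → Fin m → Fin (s + 1)) :
    pert d m s η a (Fin.last d) (Fin.last m) =
      η (Fin.last d) (Fin.last m) + ∑ i', ∑ j', (a i' j' : ℕ) := by
  simp [pert]

/-- growth of `ℓ¹`-balls around points of the macroscopic centre: for
`η ∈ Macro(δ)` and `0 < r < δn`, the number of configurations `ζ` with
`‖ζ - η‖₁ ≤ r/2` is between `c₀ r^((d-1)(m-1))` and `(r+1)^((d-1)(m-1))`. -/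
theorem stmt_6 (d m : ℕ) (hd : 2 ≤ d) (hm : 2 ≤ m) :
    ∃ c₀ : ℝ, 0 < c₀ ∧ ∀ δ : ℝ, 0 < δ → δ ≤ 1 / 2 → ∃ N : ℕ, ∀ n : ℕ, N ≤ n →
      ∀ η : Fin d → Fin m → ℕ,
        (∀ i, ∑ j, η i j = m * n) → (∀ j, ∑ i, η i j = d * n) →
        (∀ i j, (n : ℝ) - δ * n ≤ (η i j : ℝ)) →
        ∀ r : ℕ, 0 < r → (r : ℝ) < δ * n →
        ∀ K : ℕ,
          K = {ζ : Fin d → Fin m → ℕ |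
              (∀ i, ∑ j, ζ i j = m * n) ∧ (∀ j, ∑ i, ζ i j = d * n) ∧
              2 * (∑ i, ∑ j, ((ζ i j : ℤ) - (η i j : ℤ)).natAbs) ≤ r}.ncard →
          c₀ * (r : ℝ) ^ ((d - 1) * (m - 1)) ≤ (K : ℝ) ∧
            K ≤ (r + 1) ^ ((d - 1) * (m - 1)) := by
  obtain ⟨d', rfl⟩ : ∃ k, d = k + 1 := ⟨d - 1, by omega⟩
  obtain ⟨m', rfl⟩ : ∃ k, m = k + 1 := ⟨m - 1, by omega⟩
  simp only [Nat.add_sub_cancel]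
  refine ⟨(1 / (8 * (d' + 1) * (m' + 1) : ℝ)) ^ (d' * m'), by positivity, ?_⟩
  intro δ hδ hδ2
  refine ⟨0, ?_⟩
  intro n _ η hrow hcol hmacro r hr hrδ K hK
  set S : Set (Fin (d' + 1) → Fin (m' + 1) → ℕ) :=
    {ζ : Fin (d' + 1) → Fin (m' + 1) → ℕ |
      (∀ i, ∑ j, ζ i j = (m' + 1) * n) ∧ (∀ j, ∑ i, ζ i j = (d' + 1) * n) ∧
      2 * (∑ i, ∑ j, ((ζ i j : ℤ) - (η i j : ℤ)).natAbs) ≤ r} with hS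
  -- every entry of η is at least r
  have hηr : ∀ i j, r ≤ η i j := by
    intro i j
    have h1 : (r : ℝ) < (η i j : ℝ) := by
      have h2 : δ * n ≤ (n : ℝ) - δ * n := by nlinarith [Nat.cast_nonneg (α := ℝ) n]
      linarith [hmacro i j]
    exact_mod_cast h1.le
  -- pointwise bound for members of S
  have hpt : ∀ ζ ∈ S, ∀ i j, 2 * ((ζ i j : ℤ) - (η i j : ℤ)).natAbs ≤ r := by
    intro ζ hζ i j
    refine le_trans ?_ hζ.2.2
    have h1 : ((ζ i j : ℤ) - (η i j : ℤ)).natAbs ≤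
        ∑ j', ((ζ i j' : ℤ) - (η i j' : ℤ)).natAbs :=
      Finset.single_le_sum (f := fun j' => ((ζ i j' : ℤ) - (η i j' : ℤ)).natAbs)
        (fun _ _ => Nat.zero_le _) (mem_univ j)
    have h2 : ∑ j', ((ζ i j' : ℤ) - (η i j' : ℤ)).natAbs ≤
        ∑ i', ∑ j', ((ζ i' j' : ℤ) - (η i' j' : ℤ)).natAbs :=
      Finset.single_le_sum (f := fun i' => ∑ j', ((ζ i' j' : ℤ) - (η i' j' : ℤ)).natAbs)
        (fun _ _ => Nat.zero_le _) (mem_univ i)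
    omega
  -- the encoding map for the upper bound
  set F : (Fin (d' + 1) → Fin (m' + 1) → ℕ) → (Fin d' → Fin m' → Fin (r + 1)) :=
    fun ζ i' j' => ⟨min ((ζ i'.castSucc j'.castSucc : ℤ) - (η i'.castSucc j'.castSucc : ℤ)
      + (r / 2 : ℕ)).toNat r, by omega⟩ with hF
  have hFinj : Set.InjOn F S := by
    intro ζ₁ hζ₁ ζ₂ hζ₂ hFeq
    have hcs : ∀ (i' : Fin d') (j' : Fin m'),
        ζ₁ i'.castSucc j'.castSucc = ζ₂ i'.castSucc j'.castSucc := by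
      intro i' j'
      have h1 := hpt ζ₁ hζ₁ i'.castSucc j'.castSucc
      have h2 := hpt ζ₂ hζ₂ i'.castSucc j'.castSucc
      have := congrFun (congrFun hFeq i') j'
      simp only [hF, Fin.mk.injEq] at this
      omega
    have hrows : ∀ (i' : Fin d') (j : Fin (m' + 1)),
        ζ₁ i'.castSucc j = ζ₂ i'.castSucc j := by
      intro i' j
      rcases Fin.lastCases (motive := fun j => j = Fin.last m' ∨ ∃ j', j = Fin.castSucc j')
        (Or.inl rfl) (fun j' => Or.inr ⟨j', rfl⟩) j with hj | ⟨j', rfl⟩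
      · subst hj
        refine cancel_sum _ _ _ (fun x hx => ?_) ((hζ₁.1 i'.castSucc).trans (hζ₂.1 i'.castSucc).symm)
        rcases Fin.lastCases (motive := fun x => x = Fin.last m' ∨ ∃ x', x = Fin.castSucc x')
          (Or.inl rfl) (fun x' => Or.inr ⟨x', rfl⟩) x with hx' | ⟨x', rfl⟩
        · exact absurd hx' hx
        · exact hcs i' x'
      · exact hcs i' j'
    funext i j
    rcases Fin.lastCases (motive := fun i => i = Fin.last d' ∨ ∃ i', i = Fin.castSucc i')
      (Or.inl rfl) (fun i' => Or.inr ⟨i', rfl⟩) i with hi | ⟨i', rfl⟩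
    · subst hi
      refine cancel_sum (fun i => ζ₁ i j) (fun i => ζ₂ i j) _ (fun x hx => ?_)
        ((hζ₁.2.1 j).trans (hζ₂.2.1 j).symm)
      rcases Fin.lastCases (motive := fun x => x = Fin.last d' ∨ ∃ x', x = Fin.castSucc x')
        (Or.inl rfl) (fun x' => Or.inr ⟨x', rfl⟩) x with hx' | ⟨x', rfl⟩
      · exact absurd hx' hx
      · exact hrows x' j
    · exact hrows i' j
  have hSfin : S.Finite := Set.Finite.of_finite_image (Set.toFinite (F '' S)) hFinj
  -- upper bound on the cardinality
  have hupper : S.ncard ≤ (r + 1) ^ (d' * m') := by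
    have h1 : S.ncard ≤ (Set.univ : Set (Fin d' → Fin m' → Fin (r + 1))).ncard :=
      Set.ncard_le_ncard_of_injOn F (fun a _ => Set.mem_univ (F a)) hFinj Set.finite_univ
    rwa [Set.ncard_univ, Nat.card_eq_fintype_card, Fintype.card_fun, Fintype.card_fun,
      Fintype.card_fin, Fintype.card_fin, Fintype.card_fin, ← pow_mul, Nat.mul_comm] at h1
  -- lower bound construction
  set s : ℕ := r / (8 * (d' + 1) * (m' + 1)) with hs
  have hs8 : 8 * (d' + 1) * (m' + 1) * s ≤ r := by
    rw [Nat.mul_comm]; exact Nat.div_mul_le_self r _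
  have hasmall : ∀ (a : Fin d' → Fin m' → Fin (s + 1)) i' j', (a i' j' : ℕ) ≤ s :=
    fun a i' j' => Nat.lt_succ_iff.mp (a i' j').isLt
  have hAle : ∀ (a : Fin d' → Fin m' → Fin (s + 1)) (i' : Fin d'),
      ∑ j', (a i' j' : ℕ) ≤ m' * s := by
    intro a i'
    calc ∑ j', (a i' j' : ℕ) ≤ ∑ _j' : Fin m', s :=
          Finset.sum_le_sum fun j' _ => hasmall a i' j'
      _ = m' * s := by simp [Finset.sum_const, Fin.sum_const]
  have hBle : ∀ (a : Fin d' → Fin m' → Fin (s + 1)) (j' : Fin m'),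
      ∑ i', (a i' j' : ℕ) ≤ d' * s := by
    intro a j'
    calc ∑ i', (a i' j' : ℕ) ≤ ∑ _i' : Fin d', s :=
          Finset.sum_le_sum fun i' _ => hasmall a i' j'
      _ = d' * s := by simp [Finset.sum_const, Fin.sum_const]
  have hAr : ∀ (a : Fin d' → Fin m' → Fin (s + 1)) (i' : Fin d'),
      ∑ j', (a i' j' : ℕ) ≤ r := by
    intro a i'
    refine le_trans (hAle a i') (le_trans ?_ hs8)
    exact Nat.mul_le_mul_right s (by nlinarith)
  have hBr : ∀ (a : Fin d' → Fin m' → Fin (s + 1)) (j' : Fin m'),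
      ∑ i', (a i' j' : ℕ) ≤ r := by
    intro a j'
    refine le_trans (hBle a j') (le_trans ?_ hs8)
    exact Nat.mul_le_mul_right s (by nlinarith)
  have hT8 : ∀ (a : Fin d' → Fin m' → Fin (s + 1)),
      8 * (∑ i', ∑ j', (a i' j' : ℕ)) ≤ r := by
    intro a
    have h1 : ∑ i', ∑ j', (a i' j' : ℕ) ≤ d' * (m' * s) := by
      calc ∑ i', ∑ j', (a i' j' : ℕ) ≤ ∑ _i' : Fin d', m' * s :=
            Finset.sum_le_sum fun i' _ => hAle a i'
        _ = d' * (m' * s) := by simp [Finset.sum_const, Fin.sum_const]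
    have h2 : 8 * (d' * (m' * s)) ≤ 8 * (d' + 1) * (m' + 1) * s := by nlinarith
    omega
  have hmemS : ∀ a : Fin d' → Fin m' → Fin (s + 1), pert d' m' s η a ∈ S := by
    intro a
    refine ⟨?_, ?_, ?_⟩
    · -- row sums
      intro i
      rcases Fin.lastCases (motive := fun i => i = Fin.last d' ∨ ∃ i', i = Fin.castSucc i')
        (Or.inl rfl) (fun i' => Or.inr ⟨i', rfl⟩) i with hi | ⟨i', rfl⟩
      · subst hi
        rw [Fin.sum_univ_castSucc]
        simp only [pert_lc, pert_ll]
        have h1 : ∑ j' : Fin m', (η (Fin.last d') j'.castSucc - ∑ i', (a i' j' : ℕ))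
            + ∑ j' : Fin m', ∑ i', (a i' j' : ℕ) = ∑ j' : Fin m', η (Fin.last d') j'.castSucc := by
          rw [← Finset.sum_add_distrib]
          exact Finset.sum_congr rfl fun j' _ =>
            Nat.sub_add_cancel ((hBr a j').trans (hηr _ _))
        have h2 := hrow (Fin.last d')
        rw [Fin.sum_univ_castSucc] at h2
        have h3 : ∑ j', ∑ i', (a i' j' : ℕ) = ∑ i', ∑ j', (a i' j' : ℕ) :=
          Finset.sum_comm
        omega
      · rw [Fin.sum_univ_castSucc]
        simp only [pert_cc, pert_cl]
        rw [Finset.sum_add_distrib]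
        have h2 := hrow i'.castSucc
        rw [Fin.sum_univ_castSucc] at h2
        have h4 : ∑ j', (a i' j' : ℕ) ≤ η i'.castSucc (Fin.last m') :=
          (hAr a i').trans (hηr _ _)
        omega
    · -- column sums
      intro j
      rcases Fin.lastCases (motive := fun j => j = Fin.last m' ∨ ∃ j', j = Fin.castSucc j')
        (Or.inl rfl) (fun j' => Or.inr ⟨j', rfl⟩) j with hj | ⟨j', rfl⟩
      · subst hj
        rw [Fin.sum_univ_castSucc]
        simp only [pert_cl, pert_ll]
        have h1 : ∑ i' : Fin d', (η i'.castSucc (Fin.last m') - ∑ j', (a i' j' : ℕ))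
            + ∑ i' : Fin d', ∑ j', (a i' j' : ℕ) = ∑ i' : Fin d', η i'.castSucc (Fin.last m') := by
          rw [← Finset.sum_add_distrib]
          exact Finset.sum_congr rfl fun i' _ =>
            Nat.sub_add_cancel ((hAr a i').trans (hηr _ _))
        have h2 := hcol (Fin.last m')
        rw [Fin.sum_univ_castSucc] at h2
        omega
      · rw [Fin.sum_univ_castSucc]
        simp only [pert_cc, pert_lc]
        rw [Finset.sum_add_distrib]
        have h2 := hcol j'.castSucc
        rw [Fin.sum_univ_castSucc] at h2
        have h4 : ∑ i', (a i' j' : ℕ) ≤ η (Fin.last d') j'.castSucc :=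
          (hBr a j').trans (hηr _ _)
        omega
    · -- ℓ¹ distance
      have habs : ∀ (p q : ℕ), q ≤ p → (((p - q : ℕ) : ℤ) - (p : ℤ)).natAbs = q := by
        intro p q h; omega
      have habs' : ∀ (p q : ℕ), (((p + q : ℕ) : ℤ) - (p : ℤ)).natAbs = q := by
        intro p q; omega
      have hdist : ∑ i, ∑ j, ((pert d' m' s η a i j : ℤ) - (η i j : ℤ)).natAbs
          = 4 * ∑ i', ∑ j', (a i' j' : ℕ) := by
        rw [Fin.sum_univ_castSucc]
        have hin : ∀ i' : Fin d',
            ∑ j, ((pert d' m' s η a i'.castSucc j : ℤ) - (η i'.castSucc j : ℤ)).natAbs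
              = 2 * ∑ j', (a i' j' : ℕ) := by
          intro i'
          rw [Fin.sum_univ_castSucc]
          have h1 : ∀ j' : Fin m',
              ((pert d' m' s η a i'.castSucc j'.castSucc : ℤ)
                - (η i'.castSucc j'.castSucc : ℤ)).natAbs = (a i' j' : ℕ) := by
            intro j'; rw [pert_cc]; exact habs' _ _
          have h2 : ((pert d' m' s η a i'.castSucc (Fin.last m') : ℤ)
              - (η i'.castSucc (Fin.last m') : ℤ)).natAbs = ∑ j', (a i' j' : ℕ) := by
            rw [pert_cl]; exact habs _ _ ((hAr a i').trans (hηr _ _))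
          rw [Finset.sum_congr rfl fun j' _ => h1 j', h2]
          omega
        have hlast : ∑ j, ((pert d' m' s η a (Fin.last d') j : ℤ)
            - (η (Fin.last d') j : ℤ)).natAbs = 2 * ∑ i', ∑ j', (a i' j' : ℕ) := by
          rw [Fin.sum_univ_castSucc]
          have h1 : ∀ j' : Fin m',
              ((pert d' m' s η a (Fin.last d') j'.castSucc : ℤ)
                - (η (Fin.last d') j'.castSucc : ℤ)).natAbs = ∑ i', (a i' j' : ℕ) := by
            intro j'; rw [pert_lc]; exact habs _ _ ((hBr a j').trans (hηr _ _))
          have h2 : ((pert d' m' s η a (Fin.last d') (Fin.last m') : ℤ)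
              - (η (Fin.last d') (Fin.last m') : ℤ)).natAbs
              = ∑ i', ∑ j', (a i' j' : ℕ) := by
            rw [pert_ll]; exact habs' _ _
          rw [Finset.sum_congr rfl fun j' _ => h1 j', h2]
          have h3 : ∑ j', ∑ i', (a i' j' : ℕ) = ∑ i', ∑ j', (a i' j' : ℕ) :=
            Finset.sum_comm
          omega
        rw [Finset.sum_congr rfl fun i' _ => hin i', hlast, ← Finset.mul_sum]
        omega
      rw [hdist]
      have := hT8 a
      omega
  have hpertinj : Set.InjOn (pert d' m' s η) Set.univ := by
    intro a _ b _ hab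
    funext i' j'
    have := congrFun (congrFun hab i'.castSucc) j'.castSucc
    rw [pert_cc, pert_cc] at this
    exact Fin.ext (by omega)
  have hlow : (s + 1) ^ (d' * m') ≤ S.ncard := by
    have h1 : (Set.univ : Set (Fin d' → Fin m' → Fin (s + 1))).ncard ≤ S.ncard :=
      Set.ncard_le_ncard_of_injOn (pert d' m' s η) (fun a _ => hmemS a) hpertinj hSfin
    rwa [Set.ncard_univ, Nat.card_eq_fintype_card, Fintype.card_fun, Fintype.card_fun,
      Fintype.card_fin, Fintype.card_fin, Fintype.card_fin, ← pow_mul, Nat.mul_comm] at h1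
  subst hK
  constructor
  · -- real lower bound
    have h1 : r < s * (8 * (d' + 1) * (m' + 1)) + 8 * (d' + 1) * (m' + 1) :=
      Nat.lt_div_mul_add (by positivity)
    have hrsn : r ≤ (s + 1) * (8 * (d' + 1) * (m' + 1)) := by
      rw [Nat.succ_mul]; omega
    have hden : (0 : ℝ) < 8 * (d' + 1) * (m' + 1) := by positivity
    have h2 : (1 / (8 * (d' + 1) * (m' + 1) : ℝ)) * r ≤ ((s + 1 : ℕ) : ℝ) := by
      rw [div_mul_eq_mul_div, one_mul, div_le_iff₀ hden]
      exact_mod_cast hrsn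
    have h3 : ((1 / (8 * (d' + 1) * (m' + 1) : ℝ)) * r) ^ (d' * m')
        ≤ (((s + 1 : ℕ) : ℝ)) ^ (d' * m') :=
      pow_le_pow_left₀ (by positivity) h2 _
    have h4 : (((s + 1) ^ (d' * m') : ℕ) : ℝ) ≤ (S.ncard : ℝ) := by exact_mod_cast hlow
    calc (1 / (8 * (d' + 1) * (m' + 1) : ℝ)) ^ (d' * m') * (r : ℝ) ^ (d' * m')
        = ((1 / (8 * (d' + 1) * (m' + 1) : ℝ)) * r) ^ (d' * m') := by rw [mul_pow]
      _ ≤ (((s + 1 : ℕ) : ℝ)) ^ (d' * m') := h3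
      _ = (((s + 1) ^ (d' * m') : ℕ) : ℝ) := by push_cast; ring
      _ ≤ (S.ncard : ℝ) := h4
  · exact hupper
end

section
/- Let $d \ge 2$, $N \ge 2$, and let $\mu$ be a probability distribution on $S_d$ such that the single ball transition matrix $U(i,j) = \mathbb{P}_{\sigma\sim\mu}[\sigma(i) = j]$ is irreducible. Then the $(d, N, \mu)$ labeled Bernoulli--Laplace chain is irreducible. Equivalently: the submonoid of the symmetric group on the set of $dN$ slots generated by (i) all permutations obtained from elements of the support of $\mu$ by selecting one slot per urn and permuting the selected slots accordingly, and (ii) all permutations of slots within a single urn, is the full symmetric group on the $dN$ slots. -/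
open Finset

/-- The move permutation `σ_𝐣`. -/
def blMove {d N : ℕ} (σ : Equiv.Perm (Fin d)) (jj : Fin d → Fin N) :
    Equiv.Perm (Fin d × Fin N) where
  toFun p := if p.2 = jj p.1 then (σ p.1, jj (σ p.1)) else p
  invFun p := if p.2 = jj p.1 then (σ⁻¹ p.1, jj (σ⁻¹ p.1)) else p
  left_inv p := by by_cases h : p.2 = jj p.1 <;> simp [h] <;> exact Prod.ext rfl h.symm
  right_inv p := by by_cases h : p.2 = jj p.1 <;> simp [h] <;> exact Prod.ext rfl h.symm

lemma blMove_apply {d N : ℕ} (σ : Equiv.Perm (Fin d)) (jj : Fin d → Fin N) (a b) :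
    blMove σ jj (a, b) = if b = jj a then (σ a, jj (σ a)) else (a, b) := rfl

lemma submonoid_inv_mem {G : Type*} [Group G] [Finite G] {M : Submonoid G} {x : G}
    (hx : x ∈ M) : x⁻¹ ∈ M := by
  have hpos : 0 < orderOf x := orderOf_pos x
  have h1 : x * x ^ (orderOf x - 1) = 1 := by
    rw [← pow_succ', Nat.sub_add_cancel hpos, pow_orderOf_eq_one]
  rw [inv_eq_of_mul_eq_one_right h1]
  exact pow_mem hx _

lemma bl_swap_mem {d N : ℕ} (hN : 2 ≤ N)
    (μ : Equiv.Perm (Fin d) → ℝ) (hnn : ∀ σ, 0 ≤ μ σ)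
    (U : Matrix (Fin d) (Fin d) ℝ)
    (hU : ∀ i j, U i j =
      ∑ σ ∈ Finset.univ.filter (fun σ : Equiv.Perm (Fin d) => σ i = j), μ σ)
    (M : Submonoid (Equiv.Perm (Fin d × Fin N)))
    (hswap : ∀ (i : Fin d) (b b' : Fin N), Equiv.swap (i, b) (i, b') ∈ M)
    (hmove : ∀ σ, 0 < μ σ → ∀ jj : Fin d → Fin N, blMove σ jj ∈ M)
    (k : ℕ) (i j : Fin d) (hk : 0 < (U ^ k) i j) (b b' : Fin N) :
    Equiv.swap (i, b) (j, b') ∈ M := by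
  have hN0 : 0 < N := by omega
  set b0 : Fin N := ⟨0, by omega⟩ with hb0
  set b1 : Fin N := ⟨1, by omega⟩ with hb1
  have hb : b0 ≠ b1 := by simp [hb0, hb1, Fin.ext_iff]
  have hdiff : ∀ b : Fin N, ∃ b', b' ≠ b := by
    intro b
    rcases eq_or_ne b b0 with rfl | h
    · exact ⟨b1, Ne.symm hb⟩
    · exact ⟨b0, Ne.symm h⟩
  -- transitivity
  have hGtrans : ∀ i j k : Fin d,
      (∀ b b' : Fin N, Equiv.swap (i, b) (j, b') ∈ M) →
      (∀ b b' : Fin N, Equiv.swap (j, b) (k, b') ∈ M) →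
      ∀ b b' : Fin N, Equiv.swap (i, b) (k, b') ∈ M := by
    intro i j k hGij hGjk b c
    rcases eq_or_ne i k with rfl | hik
    · exact hswap i b c
    obtain ⟨b', h1, h2⟩ : ∃ b' : Fin N, (j, b') ≠ (i, b) ∧ (j, b') ≠ (k, c) := by
      rcases eq_or_ne j i with rfl | hji
      · obtain ⟨b', h⟩ := hdiff b
        exact ⟨b', fun he => h (congrArg Prod.snd he), fun he => hik (congrArg Prod.fst he)⟩
      rcases eq_or_ne j k with rfl | hjk
      · obtain ⟨b', h⟩ := hdiff c
        exact ⟨b', fun he => hji (congrArg Prod.fst he), fun he => h (congrArg Prod.snd he)⟩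
      · exact ⟨b0, fun he => hji (congrArg Prod.fst he), fun he => hjk (congrArg Prod.fst he)⟩
    have h3 : Equiv.swap ((i, b) : Fin d × Fin N) (j, b') (k, c) = (k, c) :=
      Equiv.swap_apply_of_ne_of_ne (fun he => hik (congrArg Prod.fst he).symm) (Ne.symm h2)
    have key := Equiv.swap_apply_apply (Equiv.swap ((i, b) : Fin d × Fin N) (j, b')) (j, b') (k, c)
    rw [Equiv.swap_apply_right, h3] at key
    rw [key]
    exact mul_mem (mul_mem (hGij b b') (hGjk b' c)) (submonoid_inv_mem (hGij b b'))
  -- edges from the support of μ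
  have hEdge : ∀ σ : Equiv.Perm (Fin d), 0 < μ σ →
      ∀ (i : Fin d) (b c : Fin N), Equiv.swap (i, b) (σ i, c) ∈ M := by
    intro σ hσ i b c
    rcases eq_or_ne (σ i) i with he | hne
    · rw [he]; exact hswap i b c
    have hπM : blMove σ (fun _ => b0) ∈ M := hmove σ hσ _
    have hπ0 : blMove σ (fun _ => b0) (i, b0) = (σ i, b0) := by
      rw [blMove_apply]; simp
    have hπ1 : blMove σ (fun _ => b0) (i, b1) = (i, b1) := by
      rw [blMove_apply]; simp [Ne.symm hb]
    have ht : Equiv.swap ((σ i, b0) : Fin d × Fin N) (i, b1) ∈ M := by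
      have key := Equiv.swap_apply_apply (blMove σ (fun _ => b0)) (i, b0) (i, b1)
      rw [hπ0, hπ1] at key
      rw [key]
      exact mul_mem (mul_mem hπM (hswap i b0 b1)) (submonoid_inv_mem hπM)
    set c1 := Equiv.swap ((σ i, b0) : Fin d × Fin N) (σ i, c) with hc1
    set c2 := Equiv.swap ((i, b1) : Fin d × Fin N) (i, b) with hc2
    have e1 : (c1 * c2) (σ i, b0) = (σ i, c) := by
      have h2 : c2 (σ i, b0) = (σ i, b0) :=
        Equiv.swap_apply_of_ne_of_ne (fun h => hne (congrArg Prod.fst h))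
          (fun h => hne (congrArg Prod.fst h))
      rw [Equiv.Perm.mul_apply, h2, hc1, Equiv.swap_apply_left]
    have e2 : (c1 * c2) (i, b1) = (i, b) := by
      rw [Equiv.Perm.mul_apply, hc2, Equiv.swap_apply_left, hc1]
      exact Equiv.swap_apply_of_ne_of_ne (fun h => hne (congrArg Prod.fst h).symm)
        (fun h => hne (congrArg Prod.fst h).symm)
    have key := Equiv.swap_apply_apply (c1 * c2) (σ i, b0) (i, b1)
    rw [e1, e2] at key
    rw [Equiv.swap_comm, key]
    have hc1M : c1 ∈ M := hswap _ _ _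
    have hc2M : c2 ∈ M := hswap _ _ _
    exact mul_mem (mul_mem (mul_mem hc1M hc2M) ht) (submonoid_inv_mem (mul_mem hc1M hc2M))
  have hUnn : ∀ i j, 0 ≤ U i j := by
    intro i j; rw [hU]; exact Finset.sum_nonneg fun σ _ => hnn σ
  -- single step
  have hstep : ∀ i j : Fin d, 0 < U i j →
      ∀ b b' : Fin N, Equiv.swap (i, b) (j, b') ∈ M := by
    intro i j hpos
    have hex : ∃ σ : Equiv.Perm (Fin d), 0 < μ σ ∧ σ i = j := by
      by_contra hcon
      push_neg at hcon
      have hle : U i j ≤ 0 := by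
        rw [hU]
        apply Finset.sum_nonpos
        intro σ hσ
        simp only [Finset.mem_filter] at hσ
        by_contra hneg
        push_neg at hneg
        exact hcon σ (lt_of_le_of_ne (hnn σ) (by intro h; rw [← h] at hneg; exact absurd le_rfl (not_le.mpr hneg))) hσ.2
      linarith
    obtain ⟨σ, hσ, rfl⟩ := hex
    exact hEdge σ hσ i
  -- nonnegativity of powers
  have hUknn : ∀ (k : ℕ) (i j : Fin d), (0 : ℝ) ≤ (U ^ k) i j := by
    intro k
    induction k with
    | zero =>
      intro i j; rw [pow_zero, Matrix.one_apply]; split_ifs <;> norm_num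
    | succ n ih =>
      intro i j
      rw [pow_succ, Matrix.mul_apply]
      exact Finset.sum_nonneg fun m _ => mul_nonneg (ih i m) (hUnn m j)
  -- paths
  have hpath : ∀ (k : ℕ) (i j : Fin d), 0 < (U ^ k) i j →
      ∀ b b' : Fin N, Equiv.swap (i, b) (j, b') ∈ M := by
    intro k
    induction k with
    | zero =>
      intro i j h
      rw [pow_zero, Matrix.one_apply] at h
      split_ifs at h with hij
      · subst hij; exact hswap i
      · exact absurd h (lt_irrefl 0)
    | succ n ih =>
      intro i j h
      rw [pow_succ, Matrix.mul_apply] at h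
      have hex : ∃ m, 0 < (U ^ n) i m * U m j := by
        by_contra hc
        push_neg at hc
        exact absurd h (not_lt.mpr (Finset.sum_nonpos fun m _ => hc m))
      obtain ⟨m, hm⟩ := hex
      have h1 : 0 < (U ^ n) i m := by
        rcases (hUknn n i m).lt_or_eq with h' | h'
        · exact h'
        · rw [← h', zero_mul] at hm; exact absurd hm (lt_irrefl 0)
      have h2 : 0 < U m j := by
        rcases (hUnn m j).lt_or_eq with h' | h'
        · exact h'
        · rw [← h', mul_zero] at hm; exact absurd hm (lt_irrefl 0)
      exact hGtrans i m j (ih i m h1) (hstep m j h2)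
  exact hpath k i j hk b b'

/-- if the single ball chain is irreducible, then the labeled
Bernoulli--Laplace chain with `d ≥ 2` urns and `N ≥ 2` slots per urn is irreducible:
the submonoid of permutations of the `dN` slots generated by (i) the moves `σ_𝐣` for
`σ` in the support of `μ` and slot selections `𝐣`, and (ii) the within-urn permutations,
is the full symmetric group. -/
theorem stmt_7 (d N : ℕ) (hd : 2 ≤ d) (hN : 2 ≤ N)
    (μ : Equiv.Perm (Fin d) → ℝ) (hnn : ∀ σ, 0 ≤ μ σ) (hsum : ∑ σ, μ σ = 1)
    (U : Matrix (Fin d) (Fin d) ℝ)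
    (hU : ∀ i j, U i j =
      ∑ σ ∈ Finset.univ.filter (fun σ : Equiv.Perm (Fin d) => σ i = j), μ σ)
    (hirr : ∀ i j, ∃ k : ℕ, 1 ≤ k ∧ 0 < (U ^ k) i j) :
    Submonoid.closure
      ({π : Equiv.Perm (Fin d × Fin N) | ∃ σ : Equiv.Perm (Fin d), 0 < μ σ ∧
          ∃ jj : Fin d → Fin N, ∀ a b, π (a, b) =
            if b = jj a then (σ a, jj (σ a)) else (a, b)} ∪
        {π : Equiv.Perm (Fin d × Fin N) | ∃ i : Fin d, ∀ a b,
          (a ≠ i → π (a, b) = (a, b)) ∧ (π (a, b)).1 = a}) = ⊤ := by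
  set M := Submonoid.closure
      ({π : Equiv.Perm (Fin d × Fin N) | ∃ σ : Equiv.Perm (Fin d), 0 < μ σ ∧
          ∃ jj : Fin d → Fin N, ∀ a b, π (a, b) =
            if b = jj a then (σ a, jj (σ a)) else (a, b)} ∪
        {π : Equiv.Perm (Fin d × Fin N) | ∃ i : Fin d, ∀ a b,
          (a ≠ i → π (a, b) = (a, b)) ∧ (π (a, b)).1 = a}) with hM
  have hswap : ∀ (i : Fin d) (b b' : Fin N), Equiv.swap (i, b) (i, b') ∈ M := by
    intro i b b'
    apply Submonoid.subset_closure
    right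
    refine ⟨i, fun a c => ⟨fun hai => ?_, ?_⟩⟩
    · refine Equiv.swap_apply_of_ne_of_ne ?_ ?_ <;>
        exact fun h => hai (congrArg Prod.fst h)
    · rw [Equiv.swap_apply_def]
      split_ifs with h1 h2 <;> simp_all [Prod.ext_iff]
  have hmove : ∀ σ, 0 < μ σ → ∀ jj : Fin d → Fin N, blMove σ jj ∈ M := by
    intro σ hσ jj
    exact Submonoid.subset_closure (Set.mem_union_left _ ⟨σ, hσ, jj, fun a b => rfl⟩)
  rw [Submonoid.eq_top_iff']
  intro π
  have hGood : ∀ (i j : Fin d) (b b' : Fin N), Equiv.swap (i, b) (j, b') ∈ M := by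
    intro i j b b'
    obtain ⟨k, _, hk⟩ := hirr i j
    exact bl_swap_mem hN μ hnn U hU M hswap hmove k i j hk b b'
  refine Equiv.Perm.swap_induction_on π (Submonoid.one_mem _) ?_
  intro f x y hxy hf
  obtain ⟨x1, x2⟩ := x
  obtain ⟨y1, y2⟩ := y
  exact mul_mem (hGood x1 y1 x2 y2) hf
end

section
/- Let $d \ge 2$ and let $U$ be an irreducible $d \times d$ doubly stochastic transition matrix with uniform stationary distribution $\nu$ and Cheeger constant $\Phi_* > 0$. Then there exists a spanning tree $T$ on vertex set $[d]$ such that every edge $(i,j)$ of $T$ satisfies $U(i,j) \ge \Phi_*/d$ or $U(j,i) \ge \Phi_*/d$. -/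
open Matrix Finset

section Aux

lemma aux_conn_delete {V : Type*} {G : SimpleGraph V} {v w : V}
    (hG : G.Connected) (hr : (G \ SimpleGraph.fromEdgeSet {s(v, w)}).Reachable v w) :
    (G \ SimpleGraph.fromEdgeSet {s(v, w)}).Connected := by
  rw [SimpleGraph.connected_iff] at hG ⊢
  refine ⟨?_, hG.2⟩
  intro a b
  obtain ⟨p⟩ := hG.1 a b
  induction p with
  | nil => exact SimpleGraph.Reachable.refl _
  | @cons a c b h p ih =>
    refine SimpleGraph.Reachable.trans ?_ ih
    by_cases he : s(a, c) = s(v, w)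
    · rw [Sym2.eq_iff] at he
      rcases he with ⟨rfl, rfl⟩ | ⟨rfl, rfl⟩
      · exact hr
      · exact hr.symm
    · exact SimpleGraph.Adj.reachable (by
        rw [SimpleGraph.sdiff_adj]
        exact ⟨h, by simp [SimpleGraph.fromEdgeSet_adj, he]⟩)

lemma aux_exists_tree_le {V : Type*} [Fintype V] :
    ∀ n (G : SimpleGraph V), G.edgeSet.ncard = n → G.Connected → ∃ T ≤ G, T.IsTree := by
  intro n
  induction n using Nat.strong_induction_on with
  | _ n ih =>
    intro G hn hG
    by_cases ha : G.IsAcyclic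
    · exact ⟨G, le_refl _, ⟨hG, ha⟩⟩
    · simp only [SimpleGraph.IsAcyclic] at ha
      push_neg at ha
      obtain ⟨v, c, hc⟩ := ha
      cases c with
      | nil => exact absurd hc (by simp [SimpleGraph.Walk.isCycle_def])
      | @cons _ w _ h p =>
        have he : s(v, w) ∈ (SimpleGraph.Walk.cons h p).edges := by simp
        have hr : (G \ SimpleGraph.fromEdgeSet {s(v, w)}).Reachable v w :=
          (SimpleGraph.adj_and_reachable_delete_edges_iff_exists_cycle.mpr
            ⟨v, SimpleGraph.Walk.cons h p, hc, he⟩).2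
        have hconn := aux_conn_delete hG hr
        have hle : G \ SimpleGraph.fromEdgeSet {s(v, w)} ≤ G := sdiff_le
        have hcard : (G \ SimpleGraph.fromEdgeSet {s(v, w)}).edgeSet.ncard < n := by
          have hes : (G \ SimpleGraph.fromEdgeSet {s(v, w)}).edgeSet = G.edgeSet \ {s(v, w)} := by
            rw [show G \ SimpleGraph.fromEdgeSet {s(v, w)} = G.deleteEdges {s(v, w)} from rfl,
              SimpleGraph.edgeSet_deleteEdges]
          rw [hes, ← hn]
          exact Set.ncard_diff_singleton_lt_of_mem (by exact h) (Set.toFinite _)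
        obtain ⟨T, hT1, hT2⟩ := ih _ hcard _ rfl hconn
        exact ⟨T, hT1.trans hle, hT2⟩

end Aux

/-- for an irreducible doubly stochastic `U` with Cheeger constant
`Φ* > 0`, there is a spanning tree on `[d]` each of whose edges `(i,j)` satisfies
`U(i,j) ≥ Φ*/d` or `U(j,i) ≥ Φ*/d`. -/
theorem stmt_9 (d : ℕ) (hd : 2 ≤ d) (U : Matrix (Fin d) (Fin d) ℝ)
    (hnn : ∀ i j, 0 ≤ U i j)
    (hrow : ∀ i, ∑ j, U i j = 1)
    (hcol : ∀ j, ∑ i, U i j = 1)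
    (hirr : ∀ i j, ∃ k : ℕ, 0 < (U ^ k) i j)
    (Φ : ℝ)
    (hΦ : Φ = sInf {r : ℝ | ∃ A : Finset (Fin d), A.Nonempty ∧
      (A.card : ℝ) ≤ d / 2 ∧
      r = (∑ x ∈ A, ∑ y ∈ Aᶜ, (1 / (d : ℝ)) * U x y) / ((A.card : ℝ) / d)})
    (hΦpos : 0 < Φ) :
    ∃ T : SimpleGraph (Fin d), T.IsTree ∧
      ∀ i j, T.Adj i j → Φ / d ≤ U i j ∨ Φ / d ≤ U j i := by
  classical
  have hdpos : (0 : ℝ) < d := by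
    have : 0 < d := lt_of_lt_of_le (by norm_num) hd
    exact_mod_cast this
  set S : Set ℝ := {r : ℝ | ∃ A : Finset (Fin d), A.Nonempty ∧
      (A.card : ℝ) ≤ d / 2 ∧
      r = (∑ x ∈ A, ∑ y ∈ Aᶜ, (1 / (d : ℝ)) * U x y) / ((A.card : ℝ) / d)} with hS
  have hbdd : BddBelow S := by
    refine ⟨0, ?_⟩
    rintro r ⟨A, hA, _, rfl⟩
    apply div_nonneg
    · exact Finset.sum_nonneg fun x _ => Finset.sum_nonneg fun y _ =>
        mul_nonneg (by positivity) (hnn x y)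
    · positivity
  -- the cut lemma
  have hcut : ∀ B : Finset (Fin d), B.Nonempty → (B.card : ℝ) ≤ d / 2 →
      (∀ x ∈ B, ∀ y ∈ Bᶜ, U x y < Φ / d) → False := by
    intro B hB hBhalf hcross
    have hBcard : (0 : ℝ) < B.card := by exact_mod_cast Finset.card_pos.mpr hB
    have hBc : Bᶜ.Nonempty := by
      rw [← Finset.card_pos, Finset.card_compl, Fintype.card_fin]
      have : B.card < d := by
        by_contra hle
        push_neg at hle
        have : (d : ℝ) ≤ B.card := by exact_mod_cast hle
        linarith
      omega
    have hBccard : (Bᶜ.card : ℝ) ≤ d := by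
      have := Finset.card_le_univ Bᶜ
      simp only [Finset.card_univ, Fintype.card_fin] at this
      exact_mod_cast this
    have hBcpos : (0 : ℝ) < Bᶜ.card := by exact_mod_cast Finset.card_pos.mpr hBc
    set r : ℝ := (∑ x ∈ B, ∑ y ∈ Bᶜ, (1 / (d : ℝ)) * U x y) / ((B.card : ℝ) / d) with hr
    have hrS : r ∈ S := ⟨B, hB, hBhalf, rfl⟩
    have h1 : Φ ≤ r := hΦ ▸ csInf_le hbdd hrS
    have h2 : (∑ x ∈ B, ∑ y ∈ Bᶜ, (1 / (d : ℝ)) * U x y)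
        < ∑ x ∈ B, ∑ y ∈ Bᶜ, (1 / (d : ℝ)) * (Φ / d) := by
      refine Finset.sum_lt_sum_of_nonempty hB fun x hx => ?_
      refine Finset.sum_lt_sum_of_nonempty hBc fun y hy => ?_
      exact mul_lt_mul_of_pos_left (hcross x hx y hy) (by positivity)
    have h3 : (∑ x ∈ B, ∑ y ∈ Bᶜ, (1 / (d : ℝ)) * (Φ / d))
        = (B.card : ℝ) * ((Bᶜ.card : ℝ) * ((1 / (d : ℝ)) * (Φ / d))) := by
      simp [Finset.sum_const, nsmul_eq_mul]
    have h4 : r < Φ := by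
      rw [hr, div_lt_iff₀ (by positivity)]
      rw [h3] at h2
      have key : (Bᶜ.card : ℝ) * ((1 / (d : ℝ)) * (Φ / d)) ≤ Φ / d := by
        have h2d : (d : ℝ) * ((1 / (d : ℝ)) * (Φ / d)) = Φ / d := by field_simp
        nlinarith [mul_le_mul_of_nonneg_right hBccard
          (show (0:ℝ) ≤ (1 / (d : ℝ)) * (Φ / d) by positivity)]
      have hnum : (B.card : ℝ) * ((Bᶜ.card : ℝ) * ((1 / (d : ℝ)) * (Φ / d)))
          ≤ Φ * ((B.card : ℝ) / d) := by
        calc (B.card : ℝ) * ((Bᶜ.card : ℝ) * ((1 / (d : ℝ)) * (Φ / d)))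
            ≤ (B.card : ℝ) * (Φ / d) := mul_le_mul_of_nonneg_left key hBcard.le
          _ = Φ * ((B.card : ℝ) / d) := by ring
      linarith
    linarith
  -- the graph of heavy edges
  set G0 : SimpleGraph (Fin d) :=
    { Adj := fun i j => i ≠ j ∧ (Φ / d ≤ U i j ∨ Φ / d ≤ U j i)
      symm := ⟨fun i j ⟨hne, h⟩ => ⟨hne.symm, h.symm⟩⟩
      loopless := ⟨fun i ⟨hne, _⟩ => hne rfl⟩ } with hG0
  have hconn : G0.Connected := by
    rw [SimpleGraph.connected_iff]
    refine ⟨?_, ⟨⟨0, by omega⟩⟩⟩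
    intro u v
    by_contra hnr
    set A : Finset (Fin d) := Finset.univ.filter (fun w => G0.Reachable u w) with hA
    have huA : u ∈ A := Finset.mem_filter.mpr ⟨Finset.mem_univ _, SimpleGraph.Reachable.refl u⟩
    have hvA : v ∉ A := by simp [hA, hnr]
    have hcross : ∀ x ∈ A, ∀ y ∈ Aᶜ, U x y < Φ / d ∧ U y x < Φ / d := by
      intro x hx y hy
      have hxy : ¬ G0.Adj x y := by
        intro hadj
        simp only [hA, Finset.mem_filter] at hx
        have : y ∈ A := by
          simp only [hA, Finset.mem_filter, Finset.mem_univ, true_and]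
          exact hx.2.trans hadj.reachable
        simp [Finset.mem_compl] at hy
        exact hy this
      have hne : x ≠ y := by
        rintro rfl
        rw [Finset.mem_compl] at hy
        exact hy hx
      have hxy' : ¬ (x ≠ y ∧ (Φ / d ≤ U x y ∨ Φ / d ≤ U y x)) := hxy
      push_neg at hxy'
      exact hxy' hne
    by_cases hhalf : (A.card : ℝ) ≤ d / 2
    · exact hcut A ⟨u, huA⟩ hhalf fun x hx y hy => (hcross x hx y hy).1
    · push_neg at hhalf
      refine hcut Aᶜ ⟨v, Finset.mem_compl.mpr hvA⟩ ?_ ?_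
      · have : (Aᶜ.card : ℝ) = d - A.card := by
          rw [Finset.card_compl, Fintype.card_fin]
          have := Finset.card_le_univ A
          simp only [Finset.card_univ, Fintype.card_fin] at this
          push_cast [Nat.cast_sub this]
          ring
        rw [this]; linarith
      · intro x hx y hy
        rw [compl_compl] at hy
        exact (hcross y hy x hx).2
  obtain ⟨T, hTle, hTtree⟩ := aux_exists_tree_le _ G0 rfl hconn
  exact ⟨T, hTtree, fun i j hadj => (hTle hadj).2⟩
end

section
/- Fix $d, m \ge 2$ and $\delta > 0$. Let $\Omega_n$ be the set of $x \in \mathbb{Z}_{\ge 0}^{d\times m}$ with row sums $mn$ and column sums $dn$, let $\mathrm{Macro}(\delta) = \{x \in \Omega_n : x(i,j) \ge n - \delta n \ \forall i,j\}$, and let $G$ be the graph on $\Omega_n$ where $\eta \sim \zeta$ iff $\zeta$ is obtained from $\eta$ by moving one ball of some colour $c$ from urn $i$ to urn $j$ and one ball of some colour $c'$ from urn $j$ to urn $i$ ($i \ne j$). Then for all sufficiently large $n$ and all $\eta, \zeta \in \mathrm{Macro}(\delta)$: $\frac{1}{4}\|\eta - \zeta\|_1 \le d_G(\eta, \zeta)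 \le \frac{d-1}{2d}\|\eta - \zeta\|_1$, where $d_G$ is the graph distance in $G$. -/
open Finset

def SwapRel (d m : ℕ) (η ζ : Fin d → Fin m → ℕ) : Prop :=
  ∃ (i j : Fin d) (c c' : Fin m), i ≠ j ∧
    ∀ a b, (ζ a b : ℤ) = (η a b : ℤ)
      - (if a = i ∧ b = c then 1 else 0) + (if a = j ∧ b = c then 1 else 0)
      - (if a = j ∧ b = c' then 1 else 0) + (if a = i ∧ b = c' then 1 else 0)

def SG (d m : ℕ) : SimpleGraph (Fin d → Fin m → ℕ) := SimpleGraph.fromRel (SwapRel d m)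

def L1 {d m : ℕ} (η ζ : Fin d → Fin m → ℕ) : ℕ := ∑ a, ∑ b, ((η a b : ℤ) - ζ a b).natAbs

lemma L1_self {d m : ℕ} (η : Fin d → Fin m → ℕ) : L1 η η = 0 := by simp [L1]

lemma L1_comm {d m : ℕ} (η ζ : Fin d → Fin m → ℕ) : L1 η ζ = L1 ζ η := by
  unfold L1; congr 1; ext a; congr 1; ext b; omega

lemma L1_triangle {d m : ℕ} (x y z : Fin d → Fin m → ℕ) : L1 x z ≤ L1 x y + L1 y z := by
  unfold L1
  rw [← Finset.sum_add_distrib]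
  refine Finset.sum_le_sum fun a _ => ?_
  rw [← Finset.sum_add_distrib]
  refine Finset.sum_le_sum fun b _ => ?_
  omega

lemma ind_sum {d m : ℕ} (i : Fin d) (c : Fin m) :
    ∑ a, ∑ b, (if a = i ∧ b = c then (1:ℕ) else 0) = 1 := by
  simp [ite_and, Finset.sum_ite_eq']

lemma ind_sum_int {d m : ℕ} (i : Fin d) (c : Fin m) :
    ∑ a, ∑ b, (if a = i ∧ b = c then (1:ℤ) else 0) = 1 := by
  simp [ite_and, Finset.sum_ite_eq']

lemma L1_of_swap {d m : ℕ} {η ζ : Fin d → Fin m → ℕ} (h : SwapRel d m η ζ) : L1 η ζ ≤ 4 := by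
  obtain ⟨i, j, c, c', hij, heq⟩ := h
  have key : ∀ a b, ((η a b : ℤ) - ζ a b).natAbs ≤
      (if a = i ∧ b = c then (1:ℕ) else 0) + (if a = j ∧ b = c then 1 else 0)
      + (if a = j ∧ b = c' then 1 else 0) + (if a = i ∧ b = c' then 1 else 0) := by
    intro a b
    have := heq a b
    split_ifs at this ⊢ <;> omega
  calc L1 η ζ ≤ ∑ a, ∑ b, ((if a = i ∧ b = c then (1:ℕ) else 0) + (if a = j ∧ b = c then 1 else 0)
      + (if a = j ∧ b = c' then 1 else 0) + (if a = i ∧ b = c' then 1 else 0)) :=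
        Finset.sum_le_sum fun a _ => Finset.sum_le_sum fun b _ => key a b
    _ = 4 := by
        simp only [Finset.sum_add_distrib, ind_sum]

lemma L1_of_adj {d m : ℕ} {η ζ : Fin d → Fin m → ℕ} (h : (SG d m).Adj η ζ) : L1 η ζ ≤ 4 := by
  rw [SG, SimpleGraph.fromRel_adj] at h
  rcases h.2 with h | h
  · exact L1_of_swap h
  · rw [L1_comm]; exact L1_of_swap h

lemma L1_le_walk {d m : ℕ} {η ζ : Fin d → Fin m → ℕ} (p : (SG d m).Walk η ζ) :
    L1 η ζ ≤ 4 * p.length := by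
  induction p with
  | nil => simp [L1_self]
  | cons h p ih =>
    rename_i u v w
    calc L1 _ _ ≤ L1 _ v + L1 v _ := L1_triangle _ _ _
      _ ≤ 4 + 4 * p.length := Nat.add_le_add (L1_of_adj h) ih
      _ = 4 * (SimpleGraph.Walk.cons h p).length := by
          simp [SimpleGraph.Walk.length_cons]; ring

lemma row_pos {d m : ℕ} (f : Fin d → Fin m → ℤ) (hrow : ∀ i, ∑ j, f i j = 0)
    (i : Fin d) (h : ∃ c, f i c < 0) : ∃ c', 0 < f i c' := by
  by_contra hcon
  push_neg at hcon
  obtain ⟨c, hc⟩ := h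
  have : ∑ j, f i j < ∑ _j : Fin m, (0:ℤ) :=
    Finset.sum_lt_sum (fun j _ => hcon j) ⟨c, Finset.mem_univ c, hc⟩
  simp [hrow i] at this

lemma col_neg {d m : ℕ} (f : Fin d → Fin m → ℤ) (hcol : ∀ j, ∑ i, f i j = 0)
    (c : Fin m) (h : ∃ i, 0 < f i c) : ∃ i', f i' c < 0 := by
  by_contra hcon
  push_neg at hcon
  obtain ⟨i, hi⟩ := h
  have : ∑ _i : Fin d, (0:ℤ) < ∑ i, f i c :=
    Finset.sum_lt_sum (fun j _ => hcon j) ⟨i, Finset.mem_univ i, hi⟩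
  simp [hcol c] at this

lemma exists_cycle {d m : ℕ} (hd : 2 ≤ d) (f : Fin d → Fin m → ℤ)
    (hrow : ∀ i, ∑ j, f i j = 0) (hcol : ∀ j, ∑ i, f i j = 0)
    (hne : ∃ i c, f i c ≠ 0) :
    ∃ (s : ℕ) (u : ℕ → Fin d) (c : ℕ → Fin m),
      2 ≤ s ∧ s ≤ d ∧
      (∀ t, 0 < f (u t) (c t)) ∧
      (∀ t, f (u (t+1)) (c t) < 0) ∧
      (∀ t1 t2, t1 < s → t2 < s → u t1 = u t2 → t1 = t2) ∧
      (∀ t, u t = u (t % s) ∧ c t = c (t % s)) := by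
  classical
  have hstart : ∃ p : Fin d × Fin m, 0 < f p.1 p.2 := by
    obtain ⟨i, c, hic⟩ := hne
    rcases lt_or_gt_of_ne hic with h | h
    · obtain ⟨c', hc'⟩ := row_pos f hrow i ⟨c, h⟩
      exact ⟨(i, c'), hc'⟩
    · exact ⟨(i, c), h⟩
  have hstep : ∀ p : Fin d × Fin m, 0 < f p.1 p.2 →
      ∃ q : Fin d × Fin m, 0 < f q.1 q.2 ∧ f q.1 p.2 < 0 := by
    rintro ⟨i, c⟩ h
    obtain ⟨i', hi'⟩ := col_neg f hcol c ⟨i, h⟩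
    obtain ⟨c', hc'⟩ := row_pos f hrow i' ⟨c, hi'⟩
    exact ⟨(i', c'), hc', hi'⟩
  let Q : ℕ → {p : Fin d × Fin m // 0 < f p.1 p.2} := fun n => Nat.rec
    ⟨hstart.choose, hstart.choose_spec⟩
    (fun _ q => ⟨(hstep q.1 q.2).choose, (hstep q.1 q.2).choose_spec.1⟩) n
  have hQpos : ∀ n, 0 < f (Q n).1.1 (Q n).1.2 := fun n => (Q n).2
  have hQneg : ∀ n, f (Q (n+1)).1.1 (Q n).1.2 < 0 := fun n =>
    (hstep (Q n).1 (Q n).2).choose_spec.2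
  have hcons : ∀ n, (Q (n+1)).1.1 ≠ (Q n).1.1 := by
    intro n h
    have h1 := hQpos n
    have h2 := hQneg n
    rw [h] at h2
    omega
  obtain ⟨a, b, hab, hfab⟩ := Fintype.exists_ne_map_eq_of_card_lt
    (fun k : Fin (d+1) => (Q k.1).1.1) (by simp)
  have hex : ∃ l, (∃ k, k < l ∧ (Q k).1.1 = (Q l).1.1) ∧ l ≤ d := by
    rcases Nat.lt_or_ge a.1 b.1 with h | h
    · exact ⟨b.1, ⟨a.1, h, hfab⟩, Nat.lt_succ_iff.mp b.2⟩
    · have : b.1 < a.1 := by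
        rcases Nat.lt_or_ge b.1 a.1 with h' | h'
        · exact h'
        · exact absurd (Fin.ext (Nat.le_antisymm h h')) hab.symm
      exact ⟨a.1, ⟨b.1, this, hfab.symm⟩, Nat.lt_succ_iff.mp a.2⟩
  have H : ∃ l, ∃ k, k < l ∧ (Q k).1.1 = (Q l).1.1 := ⟨hex.choose, hex.choose_spec.1⟩
  set l := Nat.find H with hldef
  obtain ⟨k0, hk0l, hQeq⟩ := Nat.find_spec H
  rw [← hldef] at hQeq hk0l
  have hld : l ≤ d := le_trans (Nat.find_le hex.choose_spec.1) hex.choose_spec.2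
  have hmin : ∀ a' b', a' < b' → b' < l → (Q a').1.1 ≠ (Q b').1.1 := by
    intro a' b' h1 h2 he
    exact Nat.find_min H h2 ⟨a', h1, he⟩
  set s := l - k0 with hsdef
  have hs1 : 1 ≤ s := by omega
  have hs2 : 2 ≤ s := by
    rcases Nat.lt_or_ge s 2 with h | h
    · exfalso
      have hlk : l = k0 + 1 := by omega
      rw [hlk] at hQeq
      exact hcons k0 hQeq.symm
    · exact h
  have hsd : s ≤ d := by omega
  have hl : l = k0 + s := by omega
  refine ⟨s, fun t => (Q (k0 + t % s)).1.1, fun t => (Q (k0 + t % s)).1.2,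
    hs2, hsd, fun t => hQpos _, ?_, ?_, ?_⟩
  · intro t
    show f (Q (k0 + (t + 1) % s)).1.1 (Q (k0 + t % s)).1.2 < 0
    have hr : t % s < s := Nat.mod_lt t (by omega)
    have h1 : (t + 1) % s = (t % s + 1) % s := by
      rw [Nat.add_mod, Nat.one_mod_eq_one.mpr (by omega : s ≠ 1)]
    rcases Nat.lt_or_ge (t % s + 1) s with h2 | h2
    · rw [h1, Nat.mod_eq_of_lt h2]
      have h4 : k0 + (t % s + 1) = (k0 + t % s) + 1 := by omega
      rw [h4]
      exact hQneg (k0 + t % s)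
    · have h3 : t % s + 1 = s := by omega
      rw [h1, h3, Nat.mod_self, Nat.add_zero, hQeq]
      have h4 : l = (k0 + t % s) + 1 := by omega
      rw [h4]
      exact hQneg (k0 + t % s)
  · intro t1 t2 h1 h2 he
    have he' : (Q (k0 + t1 % s)).1.1 = (Q (k0 + t2 % s)).1.1 := he
    rw [Nat.mod_eq_of_lt h1, Nat.mod_eq_of_lt h2] at he'
    by_contra hne'
    rcases Nat.lt_or_ge t1 t2 with h | h
    · exact hmin (k0 + t1) (k0 + t2) (by omega) (by omega) he'
    · exact hmin (k0 + t2) (k0 + t1) (by omega) (by omega) he'.symm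
  · intro t
    constructor
    · show (Q (k0 + t % s)).1.1 = (Q (k0 + t % s % s)).1.1
      rw [Nat.mod_mod_of_dvd t dvd_rfl]
    · show (Q (k0 + t % s)).1.2 = (Q (k0 + t % s % s)).1.2
      rw [Nat.mod_mod_of_dvd t dvd_rfl]

lemma sum_ind_le_one {α : Type*} (s : Finset α) (P : α → Prop) [DecidablePred P]
    (h : ∀ x ∈ s, ∀ y ∈ s, P x → P y → x = y) :
    ∑ x ∈ s, (if P x then (1:ℕ) else 0) ≤ 1 := by
  rw [Finset.sum_boole]
  simp only [Nat.cast_id]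
  exact Finset.card_le_one.mpr (by
    intro x hx y hy
    simp only [Finset.mem_filter] at hx hy
    exact h x hx.1 y hy.1 hx.2 hy.2)

lemma sum_ind_pos {α : Type*} {s : Finset α} {P : α → Prop} [DecidablePred P]
    (h : 0 < ∑ x ∈ s, (if P x then (1:ℕ) else 0)) : ∃ x ∈ s, P x := by
  rw [Finset.sum_boole] at h
  simp only [Nat.cast_id, Finset.card_pos] at h
  obtain ⟨x, hx⟩ := h
  simp only [Finset.mem_filter] at hx
  exact ⟨x, hx.1, hx.2⟩

def ee {d m : ℕ} (u : ℕ → Fin d) (c : ℕ → Fin m) (k r : ℕ) : Fin d → Fin m → ℤ :=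
  fun a b => if a = u k ∧ b = c r then 1 else 0

def df {d m : ℕ} (u : ℕ → Fin d) (c : ℕ → Fin m) (r : ℕ) : Fin d → Fin m → ℤ :=
  fun a b => -ee u c 0 r a b + ee u c (r+1) r a b - ee u c (r+1) (r+1) a b + ee u c 0 (r+1) a b

def gg {d m : ℕ} (η : Fin d → Fin m → ℕ) (u : ℕ → Fin d) (c : ℕ → Fin m) (j : ℕ) :
    Fin d → Fin m → ℤ :=
  fun a b => (η a b : ℤ) + ∑ r ∈ Finset.range j, df u c r a b

lemma tele {d m t : ℕ} (u : ℕ → Fin d) (c : ℕ → Fin m) (a : Fin d) (b : Fin m) :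
    ∑ r ∈ Finset.range t, df u c r a b
    = ((if a = u 0 ∧ b = c t then (1:ℤ) else 0) - (if a = u 0 ∧ b = c 0 then 1 else 0))
      + ∑ r ∈ Finset.range t, (if a = u (r+1) ∧ b = c r then (1:ℤ) else 0)
      - ∑ r ∈ Finset.range t, (if a = u (r+1) ∧ b = c (r+1) then (1:ℤ) else 0) := by
  have h1 : ∀ r : ℕ, df u c r a b
      = ((if a = u 0 ∧ b = c (r+1) then (1:ℤ) else 0) - (if a = u 0 ∧ b = c r then 1 else 0))
        + ((if a = u (r+1) ∧ b = c r then (1:ℤ) else 0)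
          - (if a = u (r+1) ∧ b = c (r+1) then 1 else 0)) := by
    intro r; simp only [df, ee]; ring
  rw [Finset.sum_congr rfl (fun r _ => h1 r), Finset.sum_add_distrib,
    Finset.sum_range_sub (fun r => (if a = u 0 ∧ b = c r then (1:ℤ) else 0)),
    Finset.sum_sub_distrib]
  ring

lemma ee_row_sum {d m : ℕ} (u : ℕ → Fin d) (c : ℕ → Fin m) (k r : ℕ) (a : Fin d) :
    ∑ b, ee u c k r a b = if a = u k then (1:ℤ) else 0 := by
  simp [ee, ite_and]

lemma ee_col_sum {d m : ℕ} (u : ℕ → Fin d) (c : ℕ → Fin m) (k r : ℕ) (b : Fin m) :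
    ∑ a, ee u c k r a b = if b = c r then (1:ℤ) else 0 := by
  simp [ee, ite_and, Finset.sum_ite_eq']

lemma df_row_sum {d m : ℕ} (u : ℕ → Fin d) (c : ℕ → Fin m) (r : ℕ) (a : Fin d) :
    ∑ b, df u c r a b = 0 := by
  have h2 : ∑ b, df u c r a b = -(∑ b, ee u c 0 r a b) + ∑ b, ee u c (r+1) r a b
      - ∑ b, ee u c (r+1) (r+1) a b + ∑ b, ee u c 0 (r+1) a b := by
    simp only [df, Finset.sum_add_distrib, Finset.sum_sub_distrib, Finset.sum_neg_distrib]
  rw [h2, ee_row_sum, ee_row_sum, ee_row_sum, ee_row_sum]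
  ring

lemma df_col_sum {d m : ℕ} (u : ℕ → Fin d) (c : ℕ → Fin m) (r : ℕ) (b : Fin m) :
    ∑ a, df u c r a b = 0 := by
  have h2 : ∑ a, df u c r a b = -(∑ a, ee u c 0 r a b) + ∑ a, ee u c (r+1) r a b
      - ∑ a, ee u c (r+1) (r+1) a b + ∑ a, ee u c 0 (r+1) a b := by
    simp only [df, Finset.sum_add_distrib, Finset.sum_sub_distrib, Finset.sum_neg_distrib]
  rw [h2, ee_col_sum, ee_col_sum, ee_col_sum, ee_col_sum]
  ring

lemma step_lemma {d m : ℕ} (hd : 2 ≤ d) (η ζ : Fin d → Fin m → ℕ)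
    (hrow : ∀ i, ∑ j, η i j = ∑ j, ζ i j) (hcol : ∀ j, ∑ i, η i j = ∑ i, ζ i j)
    (hne : η ≠ ζ) :
    ∃ (η' : Fin d → Fin m → ℕ) (s : ℕ) (p : (SG d m).Walk η η'),
      2 ≤ s ∧ s ≤ d ∧ p.length = s - 1 ∧
      L1 η' ζ + 2 * s = L1 η ζ ∧
      (∀ i, ∑ j, η' i j = ∑ j, ζ i j) ∧ (∀ j, ∑ i, η' i j = ∑ i, ζ i j) := by
  classical
  set f : Fin d → Fin m → ℤ := fun a b => (η a b : ℤ) - ζ a b with hf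
  have hfrow : ∀ i, ∑ j, f i j = 0 := by
    intro i
    simp only [hf]
    rw [Finset.sum_sub_distrib, ← Nat.cast_sum, ← Nat.cast_sum, hrow i, sub_self]
  have hfcol : ∀ j, ∑ i, f i j = 0 := by
    intro j
    simp only [hf]
    rw [Finset.sum_sub_distrib, ← Nat.cast_sum, ← Nat.cast_sum, hcol j, sub_self]
  have hfne : ∃ i cc, f i cc ≠ 0 := by
    by_contra hcon
    push_neg at hcon
    apply hne
    funext a b
    have := hcon a b
    simp only [hf, sub_eq_zero] at this
    exact_mod_cast this
  obtain ⟨s, u, c, hs2, hsd, hpos, hneg, hinj, hper⟩ := exists_cycle hd f hfrow hfcol hfne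
  obtain ⟨t, rfl⟩ : ∃ t, s = t + 1 := ⟨s - 1, by omega⟩
  have ht1 : 1 ≤ t := by omega
  have hu_wrap : u (t+1) = u 0 := by
    have h := (hper (t+1)).1; rwa [Nat.mod_self] at h
  have huinj1 : ∀ k1 k2, k1 < t+1 → k2 < t+1 → u (k1+1) = u (k2+1) → k1 = k2 := by
    intro k1 k2 h1 h2 he
    have e1 : u (k1+1) = u ((k1+1) % (t+1)) := (hper (k1+1)).1
    have e2 : u (k2+1) = u ((k2+1) % (t+1)) := (hper (k2+1)).1
    have m1 : (k1+1) % (t+1) < t+1 := Nat.mod_lt _ (by omega)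
    have m2 : (k2+1) % (t+1) < t+1 := Nat.mod_lt _ (by omega)
    have hq := hinj _ _ m1 m2 (by rw [← e1, ← e2, he])
    have q1 : (k1+1) % (t+1) = if k1+1 = t+1 then 0 else k1+1 := by
      split
      · next h => rw [h, Nat.mod_self]
      · exact Nat.mod_eq_of_lt (by omega)
    have q2 : (k2+1) % (t+1) = if k2+1 = t+1 then 0 else k2+1 := by
      split
      · next h => rw [h, Nat.mod_self]
      · exact Nat.mod_eq_of_lt (by omega)
    rw [q1, q2] at hq
    split_ifs at hq <;> omega
  have hcc : ∀ j, c j ≠ c (j+1) := by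
    intro j he
    have h1 := hpos (j+1)
    have h2 := hneg j
    rw [he] at h2
    omega
  have hPp_le : ∀ a b, (∑ k ∈ Finset.range (t+1), if a = u k ∧ b = c k then (1:ℕ) else 0) ≤ 1 := by
    intro a b
    apply sum_ind_le_one
    intro x hx y hy hPx hPy
    exact hinj x y (Finset.mem_range.mp hx) (Finset.mem_range.mp hy) (hPx.1.symm.trans hPy.1)
  have hNn_le : ∀ a b,
      (∑ k ∈ Finset.range (t+1), if a = u (k+1) ∧ b = c k then (1:ℕ) else 0) ≤ 1 := by
    intro a b
    apply sum_ind_le_one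
    intro x hx y hy hPx hPy
    exact huinj1 x y (Finset.mem_range.mp hx) (Finset.mem_range.mp hy) (hPx.1.symm.trans hPy.1)
  have hPp_pos : ∀ a b,
      0 < (∑ k ∈ Finset.range (t+1), if a = u k ∧ b = c k then (1:ℕ) else 0) → 0 < f a b := by
    intro a b h
    obtain ⟨k, _, hP⟩ := sum_ind_pos h
    rw [hP.1, hP.2]
    exact hpos k
  have hNn_pos : ∀ a b,
      0 < (∑ k ∈ Finset.range (t+1), if a = u (k+1) ∧ b = c k then (1:ℕ) else 0) → f a b < 0 := by
    intro a b h
    obtain ⟨k, _, hP⟩ := sum_ind_pos h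
    rw [hP.1, hP.2]
    exact hneg k
  have hPpsum : ∑ a, ∑ b, (∑ k ∈ Finset.range (t+1), if a = u k ∧ b = c k then (1:ℕ) else 0)
      = t+1 := by
    have h1 : ∀ a : Fin d, ∑ b, ∑ k ∈ Finset.range (t+1), (if a = u k ∧ b = c k then (1:ℕ) else 0)
        = ∑ k ∈ Finset.range (t+1), ∑ b, (if a = u k ∧ b = c k then (1:ℕ) else 0) :=
      fun a => Finset.sum_comm
    rw [Finset.sum_congr rfl (fun a _ => h1 a), Finset.sum_comm]
    rw [Finset.sum_congr rfl (fun k _ => ind_sum (u k) (c k))]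
    simp
  have hNnsum : ∑ a, ∑ b, (∑ k ∈ Finset.range (t+1), if a = u (k+1) ∧ b = c k then (1:ℕ) else 0)
      = t+1 := by
    have h1 : ∀ a : Fin d,
        ∑ b, ∑ k ∈ Finset.range (t+1), (if a = u (k+1) ∧ b = c k then (1:ℕ) else 0)
        = ∑ k ∈ Finset.range (t+1), ∑ b, (if a = u (k+1) ∧ b = c k then (1:ℕ) else 0) :=
      fun a => Finset.sum_comm
    rw [Finset.sum_congr rfl (fun a _ => h1 a), Finset.sum_comm]
    rw [Finset.sum_congr rfl (fun k _ => ind_sum (u (k+1)) (c k))]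
    simp
  have hD : ∀ a b, ∑ r ∈ Finset.range t, df u c r a b
      = ((∑ k ∈ Finset.range (t+1), if a = u (k+1) ∧ b = c k then (1:ℕ) else 0 : ℕ) : ℤ)
        - ((∑ k ∈ Finset.range (t+1), if a = u k ∧ b = c k then (1:ℕ) else 0 : ℕ) : ℤ) := by
    intro a b
    rw [tele]
    push_cast
    rw [Finset.sum_range_succ, Finset.sum_range_succ']
    rw [hu_wrap]
    ring
  have hMN_le_Pp : ∀ j, j ≤ t → ∀ (a : Fin d) (b : Fin m),
      (if a = u 0 ∧ b = c 0 then (1:ℕ) else 0)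
        + (∑ r ∈ Finset.range j, if a = u (r+1) ∧ b = c (r+1) then (1:ℕ) else 0)
      ≤ ∑ k ∈ Finset.range (t+1), (if a = u k ∧ b = c k then (1:ℕ) else 0) := by
    intro j hj a b
    rw [Finset.sum_range_succ']
    have hss : ∑ r ∈ Finset.range j, (if a = u (r+1) ∧ b = c (r+1) then (1:ℕ) else 0)
        ≤ ∑ r ∈ Finset.range t, (if a = u (r+1) ∧ b = c (r+1) then (1:ℕ) else 0) :=
      Finset.sum_le_sum_of_subset (Finset.range_subset_range.mpr hj)
    omega
  have hgnn : ∀ j, j ≤ t → ∀ a b, 0 ≤ gg η u c j a b := by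
    intro j hj a b
    have htel := tele (t := j) u c a b
    have hMN := hMN_le_Pp j hj a b
    have hPl := hPp_le a b
    have hkey : 1 ≤ (if a = u 0 ∧ b = c 0 then (1:ℕ) else 0)
        + (∑ r ∈ Finset.range j, if a = u (r+1) ∧ b = c (r+1) then (1:ℕ) else 0)
        → ζ a b < η a b := by
      intro h
      have h0 : 0 < ∑ k ∈ Finset.range (t+1), (if a = u k ∧ b = c k then (1:ℕ) else 0) := by
        omega
      have := hPp_pos a b h0
      simp only [hf] at this
      omega
    have hA : 0 ≤ (if a = u 0 ∧ b = c j then (1:ℤ) else 0) := by positivity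
    have hB : 0 ≤ ∑ r ∈ Finset.range j, (if a = u (r+1) ∧ b = c r then (1:ℤ) else 0) :=
      Finset.sum_nonneg (fun r _ => by positivity)
    have hc0 : (if a = u 0 ∧ b = c 0 then (1:ℤ) else 0)
        = ((if a = u 0 ∧ b = c 0 then (1:ℕ) else 0 : ℕ) : ℤ) := by
      split <;> simp
    have hcast1 : ((∑ r ∈ Finset.range j, if a = u (r+1) ∧ b = c (r+1) then (1:ℕ) else 0 : ℕ) : ℤ)
        = ∑ r ∈ Finset.range j, (if a = u (r+1) ∧ b = c (r+1) then (1:ℤ) else 0) := by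
      push_cast
      rfl
    show 0 ≤ gg η u c j a b
    simp only [gg]
    rw [htel, hc0, ← hcast1]
    omega
  set X : ℕ → Fin d → Fin m → ℕ := fun j a b => (gg η u c j a b).toNat with hX
  have hXcast : ∀ j, j ≤ t → ∀ a b, ((X j a b : ℕ) : ℤ) = gg η u c j a b :=
    fun j hj a b => Int.toNat_of_nonneg (hgnn j hj a b)
  have hX0 : X 0 = η := by
    funext a b
    simp [hX, gg]
  have hgsucc : ∀ j a b, gg η u c (j+1) a b = gg η u c j a b + df u c j a b := by
    intro j a b
    simp only [gg, Finset.sum_range_succ]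
    ring
  have hadj : ∀ j, j < t → (SG d m).Adj (X j) (X (j+1)) := by
    intro j hj
    rw [SG, SimpleGraph.fromRel_adj]
    have hu0 : u (j+1) ≠ u 0 := by
      intro hh
      have := hinj (j+1) 0 (by omega) (by omega) hh
      omega
    constructor
    · intro he
      have h1 := congrFun (congrFun he (u (j+1))) (c j)
      have h2 := hgsucc j (u (j+1)) (c j)
      have h3 : df u c j (u (j+1)) (c j) = 1 := by
        have hn1 : ¬(u (j+1) = u 0) := hu0
        have hn2 : ¬(c j = c (j+1)) := hcc j
        simp only [df, ee]
        simp [hn1, hn2]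
      have c1 := hXcast j (by omega) (u (j+1)) (c j)
      have c2 := hXcast (j+1) (by omega) (u (j+1)) (c j)
      simp only [hX] at h1
      omega
    · left
      refine ⟨u 0, u (j+1), c j, c (j+1), fun hh => hu0 hh.symm, ?_⟩
      intro a b
      have c1 := hXcast j (by omega) a b
      have c2 := hXcast (j+1) (by omega) a b
      rw [c2, c1, hgsucc j a b]
      simp only [df, ee]
      ring
  have hwalk : ∀ j, j ≤ t → ∃ p : (SG d m).Walk η (X j), p.length = j := by
    intro j
    induction j with
    | zero =>
      intro _
      exact ⟨SimpleGraph.Walk.nil.copy rfl hX0.symm, by simp⟩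
    | succ j ih =>
      intro hj
      obtain ⟨p, hp⟩ := ih (by omega)
      exact ⟨p.append (hadj j (by omega)).toWalk, by simp [hp]⟩
  obtain ⟨p, hp⟩ := hwalk t le_rfl
  refine ⟨X t, t+1, p, by omega, hsd, by omega, ?_, ?_, ?_⟩
  · -- L1 decrement
    have hpt : ∀ a b, ((X t a b : ℤ) - ζ a b).natAbs
        + (∑ k ∈ Finset.range (t+1), if a = u k ∧ b = c k then (1:ℕ) else 0)
        + (∑ k ∈ Finset.range (t+1), if a = u (k+1) ∧ b = c k then (1:ℕ) else 0)
        = ((η a b : ℤ) - ζ a b).natAbs := by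
      intro a b
      have c1 := hXcast t le_rfl a b
      have h2 : gg η u c t a b = (η a b : ℤ)
          + (((∑ k ∈ Finset.range (t+1), if a = u (k+1) ∧ b = c k then (1:ℕ) else 0 : ℕ) : ℤ)
            - ((∑ k ∈ Finset.range (t+1), if a = u k ∧ b = c k then (1:ℕ) else 0 : ℕ) : ℤ)) := by
        simp only [gg]
        rw [hD a b]
      have hl1 := hPp_le a b
      have hl2 := hNn_le a b
      rcases Nat.eq_zero_or_pos
          (∑ k ∈ Finset.range (t+1), if a = u k ∧ b = c k then (1:ℕ) else 0) with hP0 | hPpos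
      · rcases Nat.eq_zero_or_pos
            (∑ k ∈ Finset.range (t+1), if a = u (k+1) ∧ b = c k then (1:ℕ) else 0) with hN0 | hNpos
        · omega
        · have := hNn_pos a b hNpos
          simp only [hf] at this
          omega
      · rcases Nat.eq_zero_or_pos
            (∑ k ∈ Finset.range (t+1), if a = u (k+1) ∧ b = c k then (1:ℕ) else 0) with hN0 | hNpos
        · have := hPp_pos a b hPpos
          simp only [hf] at this
          omega
        · have h5 := hPp_pos a b hPpos
          have h6 := hNn_pos a b hNpos
          omega
    have hsum : ∑ a, ∑ b, (((X t a b : ℤ) - ζ a b).natAbs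
        + (∑ k ∈ Finset.range (t+1), if a = u k ∧ b = c k then (1:ℕ) else 0)
        + (∑ k ∈ Finset.range (t+1), if a = u (k+1) ∧ b = c k then (1:ℕ) else 0))
        = ∑ a, ∑ b, ((η a b : ℤ) - ζ a b).natAbs :=
      Finset.sum_congr rfl (fun a _ => Finset.sum_congr rfl (fun b _ => hpt a b))
    simp only [Finset.sum_add_distrib] at hsum
    rw [hPpsum, hNnsum] at hsum
    show L1 (X t) ζ + 2 * (t+1) = L1 η ζ
    unfold L1
    omega
  · intro a
    have hz : ((∑ j, X t a j : ℕ) : ℤ) = ((∑ j, ζ a j : ℕ) : ℤ) := by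
      push_cast
      rw [Finset.sum_congr rfl (fun b _ => hXcast t le_rfl a b)]
      show ∑ b, gg η u c t a b = _
      simp only [gg]
      rw [Finset.sum_add_distrib]
      have h1 : ∑ b, ∑ r ∈ Finset.range t, df u c r a b = 0 := by
        rw [Finset.sum_comm]
        exact Finset.sum_eq_zero (fun r _ => df_row_sum u c r a)
      rw [h1, add_zero]
      exact_mod_cast hrow a
    exact_mod_cast hz
  · intro b
    have hz : ((∑ i, X t i b : ℕ) : ℤ) = ((∑ i, ζ i b : ℕ) : ℤ) := by
      push_cast
      rw [Finset.sum_congr rfl (fun a _ => hXcast t le_rfl a b)]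
      simp only [gg]
      rw [Finset.sum_add_distrib]
      have h1 : ∑ a, ∑ r ∈ Finset.range t, df u c r a b = 0 := by
        rw [Finset.sum_comm]
        exact Finset.sum_eq_zero (fun r _ => df_col_sum u c r b)
      rw [h1, add_zero]
      exact_mod_cast hcol b
    exact_mod_cast hz

lemma main_walk {d m : ℕ} (hd : 2 ≤ d) :
    ∀ (N : ℕ) (η ζ : Fin d → Fin m → ℕ), L1 η ζ ≤ N →
    (∀ i, ∑ j, η i j = ∑ j, ζ i j) → (∀ j, ∑ i, η i j = ∑ i, ζ i j) →
    ∃ p : (SG d m).Walk η ζ, 2 * d * p.length ≤ (d - 1) * L1 η ζ := by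
  intro N
  induction N with
  | zero =>
    intro η ζ hL hr hc
    have he : η = ζ := by
      funext a b
      have h0 : ((η a b : ℤ) - ζ a b).natAbs = 0 := by
        by_contra hco
        have h1 : 0 < ∑ bb, ((η a bb : ℤ) - ζ a bb).natAbs :=
          lt_of_lt_of_le (Nat.pos_of_ne_zero hco)
            (Finset.single_le_sum (f := fun bb => ((η a bb : ℤ) - ζ a bb).natAbs)
              (fun bb _ => Nat.zero_le _) (Finset.mem_univ b))
        have h2 : 0 < L1 η ζ :=
          lt_of_lt_of_le h1 (Finset.single_le_sum
            (f := fun aa => ∑ bb, ((η aa bb : ℤ) - ζ aa bb).natAbs)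
            (fun aa _ => Nat.zero_le _) (Finset.mem_univ a))
        omega
      omega
    subst he
    exact ⟨SimpleGraph.Walk.nil, by simp⟩
  | succ N ih =>
    intro η ζ hL hr hc
    by_cases he : η = ζ
    · subst he
      refine ⟨SimpleGraph.Walk.nil, ?_⟩
      rw [SimpleGraph.Walk.length_nil]
      exact Nat.zero_le _
    · obtain ⟨η', s, p1, hsge2, hsd, hlen, hdec, hr', hc'⟩ := step_lemma hd η ζ hr hc he
      obtain ⟨p2, hp2⟩ := ih η' ζ (by omega) hr' hc'
      refine ⟨p1.append p2, ?_⟩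
      rw [SimpleGraph.Walk.length_append, hlen]
      have key : 2 * d * (s - 1) ≤ (d - 1) * (2 * s) := by
        obtain ⟨e, rfl⟩ : ∃ e, d = e + 2 := ⟨d - 2, by omega⟩
        obtain ⟨q, rfl⟩ : ∃ q, s = q + 2 := ⟨s - 2, by omega⟩
        have hqe : q ≤ e := by omega
        show 2 * (e + 2) * (q + 1) ≤ (e + 1) * (2 * (q + 2))
        nlinarith
      calc 2 * d * (s - 1 + p2.length) = 2 * d * (s - 1) + 2 * d * p2.length := by ring
        _ ≤ (d - 1) * (2 * s) + (d - 1) * L1 η' ζ := Nat.add_le_add key hp2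
        _ = (d - 1) * (L1 η' ζ + 2 * s) := by ring
        _ = (d - 1) * L1 η ζ := by rw [hdec]

/-- on the macroscopic centre `Macro(δ)`, the graph distance `d_G` in the
swap graph of the mean-field chain is equivalent to the `ℓ¹` distance:
`¼‖η-ζ‖₁ ≤ d_G(η,ζ) ≤ ((d-1)/(2d))‖η-ζ‖₁` for all sufficiently large `n`. -/
theorem stmt_13 (d m : ℕ) (hd : 2 ≤ d) (hm : 2 ≤ m) (δ : ℝ) (hδ : 0 < δ) :
    ∃ N : ℕ, ∀ n : ℕ, N ≤ n →
      ∀ G : SimpleGraph (Fin d → Fin m → ℕ),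
      G = SimpleGraph.fromRel (fun η ζ => ∃ (i j : Fin d) (c c' : Fin m), i ≠ j ∧
        ∀ a b, (ζ a b : ℤ) = (η a b : ℤ)
          - (if a = i ∧ b = c then 1 else 0) + (if a = j ∧ b = c then 1 else 0)
          - (if a = j ∧ b = c' then 1 else 0) + (if a = i ∧ b = c' then 1 else 0)) →
      ∀ η ζ : Fin d → Fin m → ℕ,
        (∀ i, ∑ j, η i j = m * n) → (∀ j, ∑ i, η i j = d * n) →
        (∀ i, ∑ j, ζ i j = m * n) → (∀ j, ∑ i, ζ i j = d * n) →
        (∀ i j, (n : ℝ) - δ * n ≤ (η i j : ℝ)) →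
        (∀ i j, (n : ℝ) - δ * n ≤ (ζ i j : ℝ)) →
        (∑ a, ∑ b, ((η a b : ℤ) - (ζ a b : ℤ)).natAbs) ≤ 4 * G.dist η ζ ∧
          2 * d * G.dist η ζ ≤ (d - 1) * ∑ a, ∑ b, ((η a b : ℤ) - (ζ a b : ℤ)).natAbs := by
  refine ⟨0, fun n _ G hG η ζ hr1 hc1 hr2 hc2 _ _ => ?_⟩
  have hGeq : G = SG d m := hG
  subst hGeq
  have hrow : ∀ i, ∑ j, η i j = ∑ j, ζ i j := fun i => by rw [hr1 i, hr2 i]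
  have hcol : ∀ j, ∑ i, η i j = ∑ i, ζ i j := fun j => by rw [hc1 j, hc2 j]
  obtain ⟨p, hp⟩ := main_walk hd (L1 η ζ) η ζ le_rfl hrow hcol
  constructor
  · have hreach : (SG d m).Reachable η ζ := ⟨p⟩
    obtain ⟨q, hq⟩ := hreach.exists_walk_length_eq_dist
    have hle := L1_le_walk q
    rw [hq] at hle
    exact hle
  · calc 2 * d * (SG d m).dist η ζ ≤ 2 * d * p.length :=
        Nat.mul_le_mul_left _ (SimpleGraph.dist_le p)
      _ ≤ (d - 1) * L1 η ζ := hp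
end

section
/- Let $P$ be an irreducible transition matrix on a finite set $S$ with stationary distribution $\pi$, let $B \subsetneq S$ be such that $A := S \setminus B$ is nonempty, and let $p = \frac{\sum_{x \in A, y \in B}\pi(x)P(x,y)}{\pi(A)}$. Define the modified transition matrix $P^{\mathrm{mod}}$ on $A$ by $P^{\mathrm{mod}}(x,y) = \frac{1}{p+1}\big(P(x,y) + P(x,B)\frac{\pi(y)}{\pi(A)} + \frac{\sum_{w\in B}\pi(w)P(w,y)}{\pi(A)}\big)$ for $x, y \in A$. Then $P^{\mathrm{mod}}$ is a stochastic matrix and its stationary distribution is $\pi_A(y) = \pi(y)/\pi(A)$. Moreover, if $P$ is reversible with respect to $\pi$, then $P^{\mathrm{mod}}$ is reversible with respect to $\pi_A$. -/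
open Finset

/-- the modified chain `P^mod` on `A` (which jumps to `π_A` whenever the
original chain tries to exit `A`, together with the stationary inflow from `B = Aᶜ`,
normalized by `1/(p+1)`) is stochastic with stationary distribution `π_A`, and is
reversible whenever `P` is. -/
theorem stmt_15 {S : Type*} [Fintype S] [DecidableEq S]
    (P : Matrix S S ℝ) (hnn : ∀ x y, 0 ≤ P x y) (hrow : ∀ x, ∑ y, P x y = 1)
    (hirr : ∀ x y, ∃ k : ℕ, 0 < (P ^ k) x y)
    (π : S → ℝ) (hπnn : ∀ x, 0 ≤ π x) (hπ1 : ∑ x, π x = 1)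
    (hstat : ∀ y, ∑ x, π x * P x y = π y)
    (A : Finset S) (hA : A.Nonempty)
    (p : ℝ) (hp : p = (∑ x ∈ A, ∑ y ∈ Aᶜ, π x * P x y) / ∑ x ∈ A, π x)
    (Pmod : {x : S // x ∈ A} → {x : S // x ∈ A} → ℝ)
    (hPmod : ∀ x y : {x : S // x ∈ A}, Pmod x y = (1 / (p + 1)) *
      (P x y + (∑ w ∈ Aᶜ, P x w) * (π y / ∑ z ∈ A, π z)
        + (∑ w ∈ Aᶜ, π w * P w y) / ∑ z ∈ A, π z))
    (πA : {x : S // x ∈ A} → ℝ) (hπA : ∀ x, πA x = π x / ∑ z ∈ A, π z) :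
    (∀ x y, 0 ≤ Pmod x y) ∧ (∀ x : {x : S // x ∈ A}, ∑ y, Pmod x y = 1) ∧
      (∀ y, ∑ x, πA x * Pmod x y = πA y) ∧
      ((∀ x y : S, π x * P x y = π y * P y x) →
        ∀ x y, πA x * Pmod x y = πA y * Pmod y x) := by
  -- nonnegativity of powers of P
  have hPknn : ∀ k : ℕ, ∀ x y, 0 ≤ (P ^ k) x y := by
    intro k
    induction k with
    | zero =>
      intro x y
      simp [Matrix.one_apply]
      split <;> norm_num
    | succ n ih =>
      intro x y
      rw [pow_succ]
      exact Finset.sum_nonneg fun z _ => mul_nonneg (ih x z) (hnn z y)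
  -- stationarity for powers of P
  have hstatk : ∀ k : ℕ, ∀ y, ∑ x, π x * (P ^ k) x y = π y := by
    intro k
    induction k with
    | zero =>
      intro y
      simp [Matrix.one_apply]
    | succ n ih =>
      intro y
      have h1 : ∀ x, (P ^ (n + 1)) x y = ∑ z, (P ^ n) x z * P z y := by
        intro x; rw [pow_succ]; rfl
      simp_rw [h1, Finset.mul_sum]
      rw [Finset.sum_comm]
      have h2 : ∀ z, ∑ x, π x * ((P ^ n) x z * P z y) = π z * P z y := by
        intro z
        rw [← ih z, Finset.sum_mul]
        exact Finset.sum_congr rfl fun x _ => by ring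
      simp_rw [h2]
      exact hstat y
  -- positivity of π
  have hx0 : ∃ x : S, 0 < π x := by
    by_contra h
    push_neg at h
    have : ∑ x, π x ≤ 0 := Finset.sum_nonpos fun x _ => h x
    linarith [hπ1]
  obtain ⟨x0, hx0⟩ := hx0
  have hπpos : ∀ y, 0 < π y := by
    intro y
    obtain ⟨k, hk⟩ := hirr x0 y
    have h := hstatk k y
    have hle : π x0 * (P ^ k) x0 y ≤ ∑ x, π x * (P ^ k) x y :=
      Finset.single_le_sum (fun x _ => mul_nonneg (hπnn x) (hPknn k x y))
        (Finset.mem_univ x0)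
    rw [h] at hle
    exact lt_of_lt_of_le (mul_pos hx0 hk) hle
  have hZpos : 0 < ∑ z ∈ A, π z := Finset.sum_pos (fun z _ => hπpos z) hA
  set Z : ℝ := ∑ z ∈ A, π z with hZ
  set N : ℝ := ∑ x ∈ A, ∑ y ∈ Aᶜ, π x * P x y with hN
  have hNnn : 0 ≤ N :=
    Finset.sum_nonneg fun x _ => Finset.sum_nonneg fun y _ =>
      mul_nonneg (hπnn x) (hnn x y)
  have hppos : 0 < p + 1 := by
    have : 0 ≤ p := by rw [hp]; positivity
    linarith
  have hpZ : p * Z = N := by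
    rw [hp]
    field_simp
  -- key balance identity: inflow = outflow
  have hMN : ∑ w ∈ Aᶜ, ∑ y ∈ A, π w * P w y = N := by
    have h1 : ∑ y ∈ A, π y = ∑ y ∈ A, ∑ x, π x * P x y :=
      Finset.sum_congr rfl fun y _ => (hstat y).symm
    have h2 : ∀ y : S, ∑ x, π x * P x y
        = ∑ x ∈ A, π x * P x y + ∑ x ∈ Aᶜ, π x * P x y := by
      intro y; rw [Finset.sum_add_sum_compl]
    simp_rw [h2] at h1
    rw [Finset.sum_add_distrib] at h1
    rw [Finset.sum_comm (s := A) (t := A), Finset.sum_comm (s := A) (t := Aᶜ)] at h1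
    have h3 : ∑ x ∈ A, ∑ y ∈ A, π x * P x y = Z - N := by
      rw [hZ, hN, ← Finset.sum_sub_distrib]
      refine Finset.sum_congr rfl fun x _ => ?_
      have hr : ∑ y ∈ A, P x y + ∑ y ∈ Aᶜ, P x y = 1 := by
        rw [Finset.sum_add_sum_compl]; exact hrow x
      rw [← Finset.mul_sum, ← Finset.mul_sum]
      linear_combination π x * hr
    rw [h3] at h1
    linarith
  -- a general formula for sums over the subtype
  have hsub : ∀ f : S → ℝ, ∑ x : {x : S // x ∈ A}, f x = ∑ x ∈ A, f x := by
    intro f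
    exact Finset.sum_coe_sort A f
  refine ⟨?_, ?_, ?_, ?_⟩
  · -- nonnegativity
    intro x y
    rw [hPmod]
    have h1 : 0 ≤ (∑ w ∈ Aᶜ, P x.1 w) := Finset.sum_nonneg fun w _ => hnn _ _
    have h2 : 0 ≤ ∑ w ∈ Aᶜ, π w * P w y.1 :=
      Finset.sum_nonneg fun w _ => mul_nonneg (hπnn _) (hnn _ _)
    have h3 : 0 ≤ π y.1 := hπnn _
    refine mul_nonneg (by positivity) ?_
    refine add_nonneg (add_nonneg (hnn _ _) ?_) ?_
    · exact mul_nonneg h1 (div_nonneg h3 hZpos.le)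
    · exact div_nonneg h2 hZpos.le
  · -- rows sum to 1
    intro x
    have h0 : ∑ y : {x : S // x ∈ A}, Pmod x y
        = ∑ y ∈ A, (1 / (p + 1)) * (P x y + (∑ w ∈ Aᶜ, P x w) * (π y / Z)
            + (∑ w ∈ Aᶜ, π w * P w y) / Z) := by
      rw [← hsub]
      exact Finset.sum_congr rfl fun y _ => hPmod x y
    rw [h0, ← Finset.mul_sum]
    have hr : ∑ y ∈ A, P x.1 y = 1 - ∑ w ∈ Aᶜ, P x.1 w := by
      have := Finset.sum_add_sum_compl A (fun y => P x.1 y)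
      rw [hrow x.1] at this
      linarith
    have hsplit : ∑ y ∈ A, (P x.1 y + (∑ w ∈ Aᶜ, P x.1 w) * (π y / Z)
        + (∑ w ∈ Aᶜ, π w * P w y) / Z)
        = (∑ y ∈ A, P x.1 y) + (∑ w ∈ Aᶜ, P x.1 w) * ((∑ y ∈ A, π y) / Z)
          + (∑ y ∈ A, ∑ w ∈ Aᶜ, π w * P w y) / Z := by
      rw [Finset.sum_add_distrib, Finset.sum_add_distrib, ← Finset.mul_sum,
        ← Finset.sum_div, ← Finset.sum_div]
    rw [hsplit, hr, Finset.sum_comm, hMN, ← hZ, ← hpZ]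
    have hZne : Z ≠ 0 := ne_of_gt hZpos
    have hpne : p + 1 ≠ 0 := ne_of_gt hppos
    field_simp
    ring
  · -- stationarity of πA
    intro y
    have h0 : ∑ x : {x : S // x ∈ A}, πA x * Pmod x y
        = ∑ x ∈ A, (π x / Z) * ((1 / (p + 1)) * (P x y + (∑ w ∈ Aᶜ, P x w) * (π y / Z)
            + (∑ w ∈ Aᶜ, π w * P w y) / Z)) := by
      rw [← hsub]
      exact Finset.sum_congr rfl fun x _ => by rw [hπA, hPmod]
    rw [h0, hπA]
    have hZne : Z ≠ 0 := ne_of_gt hZpos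
    have hpne : p + 1 ≠ 0 := ne_of_gt hppos
    have hsplit : ∀ x : S, (π x / Z) * ((1 / (p + 1)) * (P x y.1 + (∑ w ∈ Aᶜ, P x w) * (π y.1 / Z)
            + (∑ w ∈ Aᶜ, π w * P w y.1) / Z))
        = (1 / ((p + 1) * Z)) * (π x * P x y.1)
          + (π y.1 / ((p + 1) * Z * Z)) * (π x * ∑ w ∈ Aᶜ, P x w)
          + (1 / ((p + 1) * Z * Z)) * (π x * ∑ w ∈ Aᶜ, π w * P w y.1) := by
      intro x
      field_simp
    simp_rw [hsplit]
    rw [Finset.sum_add_distrib, Finset.sum_add_distrib, ← Finset.mul_sum,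
      ← Finset.mul_sum, ← Finset.mul_sum]
    have e1 : ∑ x ∈ A, π x * ∑ w ∈ Aᶜ, P x w = N := by
      rw [hN]
      exact Finset.sum_congr rfl fun x _ => Finset.mul_sum _ _ _
    have e2 : ∑ x ∈ A, π x * ∑ w ∈ Aᶜ, π w * P w y.1
        = Z * ∑ w ∈ Aᶜ, π w * P w y.1 := by
      rw [hZ, ← Finset.sum_mul]
    have hin : ∑ x ∈ A, π x * P x y.1 + ∑ w ∈ Aᶜ, π w * P w y.1 = π y.1 := by
      rw [Finset.sum_add_sum_compl]; exact hstat y.1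
    have hSA : ∑ x ∈ A, π x * P x y.1 = π y.1 - ∑ w ∈ Aᶜ, π w * P w y.1 := by
      linarith
    rw [e1, e2, ← hpZ, hSA]
    field_simp
    ring
  · -- reversibility
    intro hrev x y
    rw [hπA, hπA, hPmod, hPmod]
    have hin : ∀ b : S, ∑ w ∈ Aᶜ, π w * P w b = π b * ∑ w ∈ Aᶜ, P b w := by
      intro b
      rw [Finset.mul_sum]
      exact Finset.sum_congr rfl fun w _ => by rw [← hrev w b]
    rw [hin y.1, hin x.1]
    have h1 : π x.1 * P x.1 y.1 = π y.1 * P y.1 x.1 := hrev x.1 y.1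
    linear_combination (1 / (p + 1)) * (1 / Z) * h1
end

section
/- Let $(X_t)_{t\ge 0}$ and $(Y_t)_{t \ge 0}$ be two coupled copies of the labeled generalised Bernoulli--Laplace chain on $d$ urns with $N$ balls per urn, coupled as follows: at each jump, index the balls within each urn by $[N]$ in such a way that matched balls (balls occupying the same urn in both chains that have been paired) receive the same index, sample one uniform index per urn (shared between the two chains) and one permutation $\sigma \sim \mu$ (shared), and move the selected balls accordingly. Then the number of unmatched balls, $\rho(X_t, Y_t) := Nd - \#\{$balls in the same urn and paired in $X_t$ and $Y_t\} = \frac{1}{2}\|X_t - Y_t\|_1$ (where the $\ell^1$ norm is of the urn-occupancy count vectors), is non-increasing in $t$ almost surely. -/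
open Finset
open scoped Classical

/-- under the index-sharing coupling of two labeled generalised
Bernoulli--Laplace chains (in every urn either the same ball is selected in both chains,
or both selected balls are unmatched), the number of unmatched balls
`ρ(x,y) = #{b : x b ≠ y b} = ½‖x - y‖₁` does not increase in one coupled step. -/
theorem stmt_17 (d N : ℕ) (hd : 2 ≤ d) (hN : 1 ≤ N)
    (x y : Fin (d * N) → Fin d)
    (hx : ∀ i, (Finset.univ.filter fun c => x c = i).card = N)
    (hy : ∀ i, (Finset.univ.filter fun c => y c = i).card = N)
    (σ : Equiv.Perm (Fin d))
    (bx cy : Fin d → Fin (d * N))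
    (hbx : ∀ i, x (bx i) = i) (hcy : ∀ i, y (cy i) = i)
    (hcoupling : ∀ i, bx i = cy i ∨ (x (bx i) ≠ y (bx i) ∧ x (cy i) ≠ y (cy i)))
    (x' y' : Fin (d * N) → Fin d)
    (hx' : x' = fun c => if c ∈ Set.range bx then σ (x c) else x c)
    (hy' : y' = fun c => if c ∈ Set.range cy then σ (y c) else y c) :
    ((Finset.univ.filter fun c => x' c ≠ y' c).card ≤
      (Finset.univ.filter fun c => x c ≠ y c).card) ∧
    (∑ c, ∑ i, ((if x c = i then (1 : ℤ) else 0) - (if y c = i then 1 else 0)).natAbs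
      = 2 * (Finset.univ.filter fun c => x c ≠ y c).card) := by
  subst hx' hy'
  constructor
  · apply Finset.card_le_card
    intro c hc
    simp only [Finset.mem_filter, Finset.mem_univ, true_and] at hc ⊢
    by_cases h1 : c ∈ Set.range bx <;> by_cases h2 : c ∈ Set.range cy <;>
      simp only [h1, h2, if_true, if_false] at hc
    · exact fun h => hc (congrArg σ h)
    · obtain ⟨i, hi⟩ := h1
      rcases hcoupling i with heq | ⟨hne, _⟩
      · exact absurd ⟨i, heq ▸ hi⟩ h2
      · exact hi ▸ hne
    · obtain ⟨i, hi⟩ := h2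
      rcases hcoupling i with heq | ⟨_, hne⟩
      · exact absurd ⟨i, heq.symm ▸ hi⟩ h1
      · exact hi ▸ hne
    · exact hc
  · rw [Finset.card_filter, Finset.mul_sum]
    apply Finset.sum_congr rfl
    intro c _
    by_cases h : x c = y c
    · simp [h]
    · rw [← Finset.sum_subset (Finset.subset_univ ({x c, y c} : Finset (Fin d)))
        (fun i _ hi => ?_), Finset.sum_pair h]
      · simp [h, Ne.symm h]
      · simp only [Finset.mem_insert, Finset.mem_singleton, not_or] at hi
        rw [if_neg (Ne.symm hi.1), if_neg (Ne.symm hi.2), sub_self]; rfl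
end
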